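/- arXiv:2512.20465 — 4 statements merged into one kernel-verified Lean document; each statement's English description precedes it below -/
import Mathlib

section
/- Let H be a Hopf algebra over k, A a right H-comodule algebra with coaction δ and coinvariant subalgebra B = A^{coH}, C an algebra, F: B → C an algebra map, and ψ: A⊗C → C⊗A a twisting map such that \barψ = π_B∘ψ is a B-bimodule morphism. If ψ is a right H-comodule morphism, i.e. (id_C⊗δ)∘ψ = (ψ⊗id_H)∘(id_A⊗flip)∘(δ⊗id_C) (elementwise: c^ψ⊗(a^ψ)₍₀₎⊗(a^ψ)₍₁₎ = c^ψ⊗(a₍₀₎)^ψ⊗a₍₁₎), then the twisted push-forward algebra C⊗^ψ_BA is a right H-comodule algebra with coaction id_C⊗_Bδ. -/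
open TensorProduct LinearMap Function

noncomputable section
namespace Paper

variable (k : Type*) [Field k]
section Twist
variable (A : Type*) [Ring A] [Algebra k A] (C : Type*) [Ring C] [Algebra k C]

/-- The twisted multiplication `m^ψ := (m_C ⊗ m_A) ∘ (id_C ⊗ ψ ⊗ id_A)` as a linear map
`(C ⊗ A) ⊗ (C ⊗ A) → C ⊗ A`. -/
def tmulMap (ψ : A ⊗[k] C →ₗ[k] C ⊗[k] A) :
    (C ⊗[k] A) ⊗[k] (C ⊗[k] A) →ₗ[k] C ⊗[k] A :=
  TensorProduct.map (LinearMap.mul' k C) (LinearMap.mul' k A)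
    ∘ₗ (TensorProduct.assoc k (C ⊗[k] C) A A).toLinearMap
    ∘ₗ TensorProduct.map (TensorProduct.assoc k C C A).symm.toLinearMap LinearMap.id
    ∘ₗ TensorProduct.map (LinearMap.lTensor C ψ) LinearMap.id
    ∘ₗ TensorProduct.map (TensorProduct.assoc k C A C).toLinearMap LinearMap.id
    ∘ₗ (TensorProduct.assoc k (C ⊗[k] A) C A).symm.toLinearMap

/-- The twisted product of two elements of `C ⊗ A`. -/
def tmul (ψ : A ⊗[k] C →ₗ[k] C ⊗[k] A) (x y : C ⊗[k] A) : C ⊗[k] A :=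
  tmulMap k A C ψ (x ⊗ₜ y)

/-- `ψ` is a twisting map when the product `m^ψ` is associative. -/
def IsTwistingMap (ψ : A ⊗[k] C →ₗ[k] C ⊗[k] A) : Prop :=
  ∀ x y z : C ⊗[k] A,
    tmul k A C ψ (tmul k A C ψ x y) z = tmul k A C ψ x (tmul k A C ψ y z)

/-- `ψ (a ⊗ 1_C) = 1_C ⊗ a`. -/
def LeftNormal (ψ : A ⊗[k] C →ₗ[k] C ⊗[k] A) : Prop :=
  ∀ a : A, ψ (a ⊗ₜ (1 : C)) = (1 : C) ⊗ₜ a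

/-- `ψ (1_A ⊗ c) = c ⊗ 1_A`. -/
def RightNormal (ψ : A ⊗[k] C →ₗ[k] C ⊗[k] A) : Prop :=
  ∀ c : C, ψ ((1 : A) ⊗ₜ c) = c ⊗ₜ (1 : A)

/-- Distributive law (C1): `ψ ∘ (m_A ⊗ id_C) = (id_C ⊗ m_A) ∘ (ψ ⊗ id_A) ∘ (id_A ⊗ ψ)`. -/
def DistLawC1 (ψ : A ⊗[k] C →ₗ[k] C ⊗[k] A) : Prop :=
  ψ ∘ₗ rTensor C (LinearMap.mul' k A)
    = lTensor C (LinearMap.mul' k A)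
        ∘ₗ (TensorProduct.assoc k C A A).toLinearMap
        ∘ₗ rTensor A ψ
        ∘ₗ (TensorProduct.assoc k A C A).symm.toLinearMap
        ∘ₗ lTensor A ψ
        ∘ₗ (TensorProduct.assoc k A A C).toLinearMap

/-- Distributive law (C2): `ψ ∘ (id_A ⊗ m_C) = (m_C ⊗ id_A) ∘ (id_C ⊗ ψ) ∘ (ψ ⊗ id_C)`. -/
def DistLawC2 (ψ : A ⊗[k] C →ₗ[k] C ⊗[k] A) : Prop :=
  ψ ∘ₗ lTensor A (LinearMap.mul' k C)
    = rTensor A (LinearMap.mul' k C)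
        ∘ₗ (TensorProduct.assoc k C C A).symm.toLinearMap
        ∘ₗ lTensor C ψ
        ∘ₗ (TensorProduct.assoc k C A C).toLinearMap
        ∘ₗ rTensor C ψ
        ∘ₗ (TensorProduct.assoc k A C C).symm.toLinearMap

/-- The left-hand side of the associativity condition (Oeq):
`(id_C ⊗ m_A) ∘ (ψ ⊗ id_A) ∘ (id_A ⊗ m_C ⊗ id_A) ∘ (id_A ⊗ id_C ⊗ ψ)`. -/
def OeqLHS (ψ : A ⊗[k] C →ₗ[k] C ⊗[k] A) :
    (A ⊗[k] C) ⊗[k] (A ⊗[k] C) →ₗ[k] C ⊗[k] A :=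
  lTensor C (LinearMap.mul' k A)
    ∘ₗ (TensorProduct.assoc k C A A).toLinearMap
    ∘ₗ rTensor A ψ
    ∘ₗ TensorProduct.map (lTensor A (LinearMap.mul' k C)) LinearMap.id
    ∘ₗ TensorProduct.map (TensorProduct.assoc k A C C).toLinearMap LinearMap.id
    ∘ₗ (TensorProduct.assoc k (A ⊗[k] C) C A).symm.toLinearMap
    ∘ₗ lTensor (A ⊗[k] C) ψ

/-- The right-hand side of the associativity condition (Oeq):
`(m_C ⊗ id_A) ∘ (id_C ⊗ ψ) ∘ (id_C ⊗ m_A ⊗ id_C) ∘ (ψ ⊗ id_A ⊗ id_C)`. -/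
def OeqRHS (ψ : A ⊗[k] C →ₗ[k] C ⊗[k] A) :
    (A ⊗[k] C) ⊗[k] (A ⊗[k] C) →ₗ[k] C ⊗[k] A :=
  rTensor A (LinearMap.mul' k C)
    ∘ₗ (TensorProduct.assoc k C C A).symm.toLinearMap
    ∘ₗ lTensor C ψ
    ∘ₗ (TensorProduct.assoc k C A C).toLinearMap
    ∘ₗ TensorProduct.map (lTensor C (LinearMap.mul' k A)) LinearMap.id
    ∘ₗ TensorProduct.map (TensorProduct.assoc k C A A).toLinearMap LinearMap.id
    ∘ₗ (TensorProduct.assoc k (C ⊗[k] A) A C).symm.toLinearMap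
    ∘ₗ rTensor (A ⊗[k] C) ψ

/-- The set of relations `c ⊗ (b·a) - (c·F(b)) ⊗ a` defining the push-forward `C ⊗_B A`. -/
def relSet (B : Subalgebra k A) (F : B →ₐ[k] C) : Set (C ⊗[k] A) :=
  {x | ∃ (c : C) (b : B) (a : A), x = c ⊗ₜ ((b : A) * a) - (c * F b) ⊗ₜ a}

/-- The subspace spanned by the relations defining the push-forward `C ⊗_B A`. -/
def relSpan (B : Subalgebra k A) (F : B →ₐ[k] C) : Submodule k (C ⊗[k] A) :=
  Submodule.span k (relSet k A C B F)

end Twist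
section Star
variable [StarRing k] [TrivialStar k]
variable (X : Type*) [Ring X] [Algebra k X] [StarRing X] [StarModule k X]
variable (Y : Type*) [Ring Y] [Algebra k Y] [StarRing Y] [StarModule k Y]

/-- The map `(∗_Y ⊗ ∗_X) ∘ flip : X ⊗ Y → Y ⊗ X`, `x ⊗ y ↦ y* ⊗ x*`. -/
def starFlip : X ⊗[k] Y →ₗ[k] Y ⊗[k] X :=
  TensorProduct.lift (LinearMap.mk₂ k (fun x y => (star y : Y) ⊗ₜ[k] (star x : X))
    (fun x x' y => by simp [star_add, TensorProduct.tmul_add])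
    (fun r x y => by simp [star_smul, star_trivial, TensorProduct.tmul_smul])
    (fun x y y' => by simp [star_add, TensorProduct.add_tmul])
    (fun r x y => by simp [star_smul, star_trivial, TensorProduct.smul_tmul']))

@[simp] lemma starFlip_tmul (x : X) (y : Y) :
    starFlip k X Y (x ⊗ₜ y) = (star y : Y) ⊗ₜ (star x : X) := rfl

end Star
section Flat
variable (R : Type*) [Ring R] (M : Type*) [AddCommGroup M] [Module R M]

/-- Flatness of a left module over a (possibly noncommutative) ring, via the equational
criterion: every linear relation among elements of `M` is a consequence of linear relations
holding in `R`. -/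
def IsFlatLeft : Prop :=
  ∀ (n : ℕ) (r : Fin n → R) (x : Fin n → M), (∑ i, r i • x i) = 0 →
    ∃ (m : ℕ) (a : Fin n → Fin m → R) (y : Fin m → M),
      (∀ i, x i = ∑ j, a i j • y j) ∧ ∀ j, (∑ i, r i * a i j) = 0

/-- Faithful flatness of a left module over a (possibly noncommutative) ring: flatness
together with `I·M ≠ M` for every maximal right ideal `I` of `R`. -/
def IsFaithfullyFlatLeft : Prop :=
  IsFlatLeft R M ∧ ∀ I : Submodule Rᵐᵒᵖ R, IsCoatom I →
    AddSubgroup.closure {z : M | ∃ i ∈ I, ∃ v : M, z = i • v} ≠ ⊤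

end Flat
section Hopf
variable (A : Type*) [Ring A] [Algebra k A] (C : Type*) [Ring C] [Algebra k C]
variable (H : Type*) [Ring H] [HopfAlgebra k H]

/-- `δ : A → A ⊗ H` makes `A` a right `H`-comodule algebra: `δ` is an algebra map (built in)
which is coassociative and counital. -/
def IsComodAlg (δ : A →ₐ[k] A ⊗[k] H) : Prop :=
  ((TensorProduct.assoc k A H H).toLinearMap ∘ₗ rTensor H δ.toLinearMap ∘ₗ δ.toLinearMap
      = lTensor A (Coalgebra.comul (R := k) (A := H)) ∘ₗ δ.toLinearMap)
    ∧ ((TensorProduct.rid k A).toLinearMap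
        ∘ₗ lTensor A (Coalgebra.counit (R := k) (A := H)) ∘ₗ δ.toLinearMap
      = LinearMap.id)

/-- The subalgebra `A^{co H}` of coinvariant elements of a comodule algebra. -/
def coinv (δ : A →ₐ[k] A ⊗[k] H) : Subalgebra k A where
  carrier := {a | δ a = a ⊗ₜ[k] (1 : H)}
  mul_mem' := by
    intro a b ha hb
    simp only [Set.mem_setOf_eq] at *
    rw [map_mul, ha, hb, Algebra.TensorProduct.tmul_mul_tmul, one_mul]
  one_mem' := by
    simp only [Set.mem_setOf_eq, map_one, Algebra.TensorProduct.one_def]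
  add_mem' := by
    intro a b ha hb
    simp only [Set.mem_setOf_eq] at *
    rw [map_add, ha, hb, TensorProduct.add_tmul]
  algebraMap_mem' := by
    intro r
    simp only [Set.mem_setOf_eq, AlgHom.commutes, Algebra.TensorProduct.algebraMap_apply]

/-- The canonical map `A ⊗ A → A ⊗ H`, `a ⊗ a' ↦ a a'₍₀₎ ⊗ a'₍₁₎` (before taking the
quotient `A ⊗_B A`). -/
def chi0 (δ : A →ₐ[k] A ⊗[k] H) : A ⊗[k] A →ₗ[k] A ⊗[k] H :=
  rTensor H (LinearMap.mul' k A)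
    ∘ₗ (TensorProduct.assoc k A A H).symm.toLinearMap
    ∘ₗ lTensor A δ.toLinearMap

/-- The coaction `id_C ⊗ δ` on `C ⊗ A` (with `C` a trivial comodule), as a map
`C ⊗ A → (C ⊗ A) ⊗ H`. -/
def coactT (δ : A →ₐ[k] A ⊗[k] H) : C ⊗[k] A →ₗ[k] (C ⊗[k] A) ⊗[k] H :=
  (TensorProduct.assoc k C A H).symm.toLinearMap ∘ₗ lTensor C δ.toLinearMap

/-- `ψ : A ⊗ C → C ⊗ A` is a morphism of right `H`-comodules:
`(id_C ⊗ δ) ∘ ψ = (ψ ⊗ id_H) ∘ (id_A ⊗ flip) ∘ (δ ⊗ id_C)`. -/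
def IsComodMor (δ : A →ₐ[k] A ⊗[k] H) (ψ : A ⊗[k] C →ₗ[k] C ⊗[k] A) : Prop :=
  lTensor C δ.toLinearMap ∘ₗ ψ
    = (TensorProduct.assoc k C A H).toLinearMap
        ∘ₗ rTensor H ψ
        ∘ₗ (TensorProduct.assoc k A C H).symm.toLinearMap
        ∘ₗ lTensor A (TensorProduct.comm k H C).toLinearMap
        ∘ₗ (TensorProduct.assoc k A H C).toLinearMap
        ∘ₗ rTensor C δ.toLinearMap

variable {k H} in
/-- Given a multiplication `m` on `P`, the induced multiplication on `P ⊗ H`. -/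
def tmulH {P : Type*} [AddCommGroup P] [Module k P] (m : P →ₗ[k] P →ₗ[k] P) :
    P ⊗[k] H →ₗ[k] P ⊗[k] H →ₗ[k] P ⊗[k] H :=
  TensorProduct.map₂ m (LinearMap.mul k H)

variable {k H} in
/-- The canonical Galois map `P ⊗ P → P ⊗ H`, `x ⊗ y ↦ (x ·_m y₍₀₎) ⊗ y₍₁₎`, for a
multiplication `m` and a coaction `db` on `P`. -/
def chiP {P : Type*} [AddCommGroup P] [Module k P]
    (m : P →ₗ[k] P →ₗ[k] P) (db : P →ₗ[k] P ⊗[k] H) : P ⊗[k] P →ₗ[k] P ⊗[k] H :=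
  rTensor H (TensorProduct.lift m)
    ∘ₗ (TensorProduct.assoc k P P H).symm.toLinearMap
    ∘ₗ lTensor P db

variable {k C} in
/-- The span of the relations `(x ·_m e c) ⊗ y - x ⊗ (e c ·_m y)` defining the balanced tensor
product `P ⊗_C P` over the image of `C` in `P`. -/
def balSpan {P : Type*} [AddCommGroup P] [Module k P]
    (m : P →ₗ[k] P →ₗ[k] P) (e : C → P) : Submodule k (P ⊗[k] P) :=
  Submodule.span k {z | ∃ (x y : P) (c : C), z = (m x (e c)) ⊗ₜ y - x ⊗ₜ (m (e c) y)}

variable {k H} in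
/-- Coassociativity of a coaction `db : P → P ⊗ H`. -/
def Coassoc {P : Type*} [AddCommGroup P] [Module k P] (db : P →ₗ[k] P ⊗[k] H) : Prop :=
  (TensorProduct.assoc k P H H).toLinearMap ∘ₗ rTensor H db ∘ₗ db
    = lTensor P (Coalgebra.comul (R := k) (A := H)) ∘ₗ db

variable {k H} in
/-- Counitality of a coaction `db : P → P ⊗ H`. -/
def Counital {P : Type*} [AddCommGroup P] [Module k P] (db : P →ₗ[k] P ⊗[k] H) : Prop :=
  (TensorProduct.rid k P).toLinearMap
      ∘ₗ lTensor P (Coalgebra.counit (R := k) (A := H)) ∘ₗ db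
    = LinearMap.id

variable {k H} in
/-- Convolution product of two linear maps `H → P`, with respect to a multiplication `m`
on `P`. -/
def convP {P : Type*} [AddCommGroup P] [Module k P]
    (m : P →ₗ[k] P →ₗ[k] P) (f g : H →ₗ[k] P) : H →ₗ[k] P :=
  TensorProduct.lift m ∘ₗ TensorProduct.map f g ∘ₗ Coalgebra.comul (R := k) (A := H)

variable {k H} in
/-- The unit for convolution: `h ↦ ε(h) • u`. -/
def convUnit {P : Type*} [AddCommGroup P] [Module k P] (u : P) : H →ₗ[k] P :=
  (Coalgebra.counit (R := k) (A := H)).smulRight u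

end Hopf

section HopfPush
variable (A : Type*) [Ring A] [Algebra k A] (C : Type*) [Ring C] [Algebra k C]
variable (H : Type*) [Ring H] [HopfAlgebra k H]
section PushForward
variable (δ : A →ₐ[k] A ⊗[k] H) (F : coinv k A H δ →ₐ[k] C)

/-- The subspace of `C ⊗ A` defining the push-forward `C ⊗_B A`, `B = A^{co H}`. -/
def pushSpan : Submodule k (C ⊗[k] A) := relSpan k A C (coinv k A H δ) F

/-- The quotient map `C ⊗ A → C ⊗_B A`. -/
def pushQ : C ⊗[k] A →ₗ[k] (C ⊗[k] A) ⧸ pushSpan k A C H δ F :=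
  (pushSpan k A C H δ F).mkQ

/-- `\barψ = π_B ∘ ψ` is a `B`-bimodule morphism. -/
def BarBimod (ψ : A ⊗[k] C →ₗ[k] C ⊗[k] A) : Prop :=
  (∀ (b : coinv k A H δ) (a : A) (c : C),
      pushQ k A C H δ F (ψ (((b : A) * a) ⊗ₜ c))
        = pushQ k A C H δ F (rTensor A (LinearMap.mulLeft k (F b)) (ψ (a ⊗ₜ c))))
  ∧ (∀ (b : coinv k A H δ) (a : A) (c : C),
      pushQ k A C H δ F (ψ (a ⊗ₜ (c * F b)))
        = pushQ k A C H δ F (lTensor C (LinearMap.mulRight k (b : A)) (ψ (a ⊗ₜ c))))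

/-- `\barψ (1_A ⊗ c) = c ⊗_B 1_A` and `\barψ (a ⊗ 1_C) = 1_C ⊗_B a`. -/
def BarNormal (ψ : A ⊗[k] C →ₗ[k] C ⊗[k] A) : Prop :=
  (∀ c : C, pushQ k A C H δ F (ψ ((1 : A) ⊗ₜ c)) = pushQ k A C H δ F (c ⊗ₜ (1 : A)))
  ∧ (∀ a : A, pushQ k A C H δ F (ψ (a ⊗ₜ (1 : C))) = pushQ k A C H δ F ((1 : C) ⊗ₜ a))

/-- `σ` is the canonical left `C`-action on the push-forward `C ⊗_B A`:
`σ c (c' ⊗_B a) = (c c') ⊗_B a`. -/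
def SigmaSpec (σ : C →ₗ[k] ((C ⊗[k] A) ⧸ pushSpan k A C H δ F)
    →ₗ[k] ((C ⊗[k] A) ⧸ pushSpan k A C H δ F)) : Prop :=
  ∀ (c : C) (x : C ⊗[k] A),
    σ c (pushQ k A C H δ F x) = pushQ k A C H δ F (rTensor A (LinearMap.mulLeft k c) x)

/-- The distributive law `\barψ (a ⊗ c c') = c^ψ · \barψ (a^ψ ⊗ c')`, where `·` denotes the
left `C`-action `σ` on the push-forward. -/
def BarDistrib (ψ : A ⊗[k] C →ₗ[k] C ⊗[k] A)
    (σ : C →ₗ[k] ((C ⊗[k] A) ⧸ pushSpan k A C H δ F)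
      →ₗ[k] ((C ⊗[k] A) ⧸ pushSpan k A C H δ F)) : Prop :=
  (pushQ k A C H δ F ∘ₗ ψ) ∘ₗ lTensor A (LinearMap.mul' k C)
    = TensorProduct.lift σ
        ∘ₗ lTensor C (pushQ k A C H δ F ∘ₗ ψ)
        ∘ₗ (TensorProduct.assoc k C A C).toLinearMap
        ∘ₗ rTensor C ψ
        ∘ₗ (TensorProduct.assoc k A C C).symm.toLinearMap

/-- The embedding `C → C ⊗_B A`, `c ↦ c ⊗_B 1_A`. -/
def eC : C → (C ⊗[k] A) ⧸ pushSpan k A C H δ F :=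
  fun c => pushQ k A C H δ F (c ⊗ₜ (1 : A))

end PushForward

section Galois
variable (δ : A →ₐ[k] A ⊗[k] H)

/-- The subspace of `A ⊗ A` defining the balanced tensor product `A ⊗_B A`, `B = A^{co H}`. -/
def galSpan : Submodule k (A ⊗[k] A) :=
  relSpan k A A (coinv k A H δ) (coinv k A H δ).val

/-- The quotient map `A ⊗ A → A ⊗_B A`. -/
def galQ : A ⊗[k] A →ₗ[k] (A ⊗[k] A) ⧸ galSpan k A H δ := (galSpan k A H δ).mkQ

/-- The translation map `τ = χ⁻¹(1_A ⊗ -) : H → A ⊗_B A` obtained from a bijective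
canonical map `χ`. -/
def transMap (χ : ((A ⊗[k] A) ⧸ galSpan k A H δ) ≃ₗ[k] A ⊗[k] H) :
    H →ₗ[k] (A ⊗[k] A) ⧸ galSpan k A H δ :=
  χ.symm.toLinearMap ∘ₗ TensorProduct.mk k A H 1

end Galois
end HopfPush
end Paper

section Helpers
set_option synthInstance.maxHeartbeats 1000000
set_option maxHeartbeats 1000000
open Paper
variable (k : Type*) [Field k] (A : Type*) [Ring A] [Algebra k A]
    (C : Type*) [Ring C] [Algebra k C] (H : Type*) [Ring H] [HopfAlgebra k H]

/-- Naturality helper: `(f ⊗ id_H) ∘ assoc⁻¹ (c ⊗ v) = ((f ∘ mk c) ⊗ id_H) v`. -/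
lemma aux_rT_assoc_symm {P : Type*} [AddCommGroup P] [Module k P]
    (f : C ⊗[k] A →ₗ[k] P) (c : C) (v : A ⊗[k] H) :
    rTensor H f ((TensorProduct.assoc k C A H).symm (c ⊗ₜ v))
      = rTensor H (f ∘ₗ TensorProduct.mk k C A c) v := by
  induction v using TensorProduct.induction_on with
  | zero => simp
  | tmul a h => simp
  | add u v hu hv => simp only [tmul_add, map_add, hu, hv]

/-- `assoc ((f ⊗ id) u ⊗ h) = (f ⊗ id ⊗ id) (assoc (u ⊗ h))`. -/
lemma aux_assoc_nat {P : Type*} [AddCommGroup P] [Module k P]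
    (f : A →ₗ[k] P) (u : A ⊗[k] H) (h : H) :
    (TensorProduct.assoc k P H H) ((rTensor H f u) ⊗ₜ h)
      = TensorProduct.map f LinearMap.id ((TensorProduct.assoc k A H H) (u ⊗ₜ h)) := by
  induction u using TensorProduct.induction_on with
  | zero => simp
  | tmul a y => simp
  | add u v hu hv => simp only [map_add, add_tmul, hu, hv]

/-- `(f ⊗ id_{H⊗H}) ∘ (id ⊗ comul) = (id ⊗ comul) ∘ (f ⊗ id_H)`. -/
lemma aux_comul_nat {P : Type*} [AddCommGroup P] [Module k P]
    (f : A →ₗ[k] P) (v : A ⊗[k] H) :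
    TensorProduct.map f LinearMap.id (lTensor A (Coalgebra.comul (R := k) (A := H)) v)
      = lTensor P (Coalgebra.comul (R := k) (A := H)) (rTensor H f v) := by
  induction v using TensorProduct.induction_on with
  | zero => simp
  | tmul a h => simp
  | add u v hu hv => simp only [map_add, hu, hv]

/-- `rid ((id ⊗ counit) ((f ⊗ id) v)) = f (rid ((id ⊗ counit) v))`. -/
lemma aux_counit_nat {P : Type*} [AddCommGroup P] [Module k P]
    (f : A →ₗ[k] P) (v : A ⊗[k] H) :
    (TensorProduct.rid k P) (lTensor P (Coalgebra.counit (R := k) (A := H)) (rTensor H f v))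
      = f ((TensorProduct.rid k A) (lTensor A (Coalgebra.counit (R := k) (A := H)) v)) := by
  induction v using TensorProduct.induction_on with
  | zero => simp
  | tmul a h => simp
  | add u v hu hv => simp only [map_add, hu, hv]

/-- The twisted product of pure tensors:
`(c ⊗ a) ·ψ (c' ⊗ a') = (mulLeft c ⊗ mulRight a') (ψ (a ⊗ c'))`. -/
lemma aux_tmul_pure (ψ : A ⊗[k] C →ₗ[k] C ⊗[k] A) (c : C) (a : A) (c' : C) (a' : A) :
    Paper.tmul k A C ψ (c ⊗ₜ a) (c' ⊗ₜ a')
      = TensorProduct.map (mulLeft k c) (mulRight k a') (ψ (a ⊗ₜ c')) := by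
  unfold Paper.tmul tmulMap
  simp only [coe_comp, LinearMap.comp_apply, LinearEquiv.coe_coe, assoc_symm_tmul, map_tmul,
    assoc_tmul, lTensor_tmul, id_coe, id_eq]
  generalize ψ (a ⊗ₜ c') = w
  induction w using TensorProduct.induction_on with
  | zero => simp
  | tmul d b => simp [mul'_apply]
  | add u v hu hv =>
      simp only [tmul_add, add_tmul, map_add, hu, hv]

lemma aux_mulRight_add (z₁ z₂ : A ⊗[k] H) :
    mulRight k (z₁ + z₂) = mulRight k z₁ + mulRight k z₂ := by
  ext x; simp [mul_add]

end Helpers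

set_option synthInstance.maxHeartbeats 1000000 in
set_option maxHeartbeats 4000000 in
open Paper in
/-- if `ψ` is a twisting map with `\barψ` a `B`-bimodule morphism, and `ψ` is a
right `H`-comodule morphism, then the twisted push-forward algebra `C ⊗^ψ_B A` is a right
`H`-comodule algebra with coaction `id_C ⊗_B δ`: the induced coaction `db` is multiplicative
and unital with respect to the induced multiplication `m`, coassociative and counital. -/
theorem pushforward_comodule_algebra
    (k : Type*) [Field k] (A : Type*) [Ring A] [Algebra k A]
    (C : Type*) [Ring C] [Algebra k C] (H : Type*) [Ring H] [HopfAlgebra k H]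
    (δ : A →ₐ[k] A ⊗[k] H) (hδ : IsComodAlg k A H δ)
    (F : coinv k A H δ →ₐ[k] C)
    (ψ : A ⊗[k] C →ₗ[k] C ⊗[k] A) (hψ : IsTwistingMap k A C ψ)
    (hbar : BarBimod k A C H δ F ψ)
    (hcomod : IsComodMor k A C H δ ψ)
    (m : ((C ⊗[k] A) ⧸ pushSpan k A C H δ F) →ₗ[k]
      ((C ⊗[k] A) ⧸ pushSpan k A C H δ F) →ₗ[k] ((C ⊗[k] A) ⧸ pushSpan k A C H δ F))
    (hm : ∀ x y : C ⊗[k] A,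
      m (pushQ k A C H δ F x) (pushQ k A C H δ F y) = pushQ k A C H δ F (tmul k A C ψ x y))
    (db : ((C ⊗[k] A) ⧸ pushSpan k A C H δ F) →ₗ[k]
      ((C ⊗[k] A) ⧸ pushSpan k A C H δ F) ⊗[k] H)
    (hdb : ∀ x : C ⊗[k] A,
      db (pushQ k A C H δ F x) = rTensor H (pushQ k A C H δ F) (coactT k A C H δ x)) :
    (∀ p q, db (m p q) = tmulH m (db p) (db q))
    ∧ db (pushQ k A C H δ F ((1 : C) ⊗ₜ (1 : A)))
        = pushQ k A C H δ F ((1 : C) ⊗ₜ (1 : A)) ⊗ₜ (1 : H)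
    ∧ Coassoc db ∧ Counital db := by
  classical
  set Q : C ⊗[k] A →ₗ[k] (C ⊗[k] A) ⧸ pushSpan k A C H δ F := pushQ k A C H δ F with hQdef
  have hQsurj : Function.Surjective Q := Submodule.mkQ_surjective _
  have hdb' : ∀ (c : C) (a : A), db (Q (c ⊗ₜ a))
      = rTensor H (Q ∘ₗ TensorProduct.mk k C A c) (δ a) := by
    intro c a
    rw [hdb]
    unfold coactT
    simp only [coe_comp, LinearMap.comp_apply, LinearEquiv.coe_coe, lTensor_tmul,
      AlgHom.toLinearMap_apply]
    exact aux_rT_assoc_symm k A C H Q c (δ a)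
  have hC1 : ∀ (c : C) (a' : A) (w : C ⊗[k] A),
      db (Q (TensorProduct.map (mulLeft k c) (mulRight k a') w))
        = rTensor H Q ((TensorProduct.assoc k C A H).symm
            (TensorProduct.map (mulLeft k c) (mulRight k (δ a'))
              (lTensor C δ.toLinearMap w))) := by
    intro c a' w
    induction w using TensorProduct.induction_on with
    | zero => simp
    | tmul d b =>
        simp only [map_tmul, mulLeft_apply, mulRight_apply, lTensor_tmul,
          AlgHom.toLinearMap_apply]
        rw [hdb' (c * d) (b * a'), _root_.map_mul δ b a']
        exact (aux_rT_assoc_symm k A C H Q (c * d) (δ b * δ a')).symm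
    | add u v hu hv => simp only [map_add, hu, hv]
  have hFC : ∀ (c c' : C) (v'' v : A ⊗[k] H),
      rTensor H Q ((TensorProduct.assoc k C A H).symm
        (TensorProduct.map (mulLeft k c) (mulRight k v'')
          ((TensorProduct.assoc k C A H)
            (rTensor H ψ ((TensorProduct.assoc k A C H).symm
              (lTensor A (TensorProduct.comm k H C).toLinearMap
                ((TensorProduct.assoc k A H C) (v ⊗ₜ c'))))))))
        = tmulH m (rTensor H (Q ∘ₗ TensorProduct.mk k C A c) v)
            (rTensor H (Q ∘ₗ TensorProduct.mk k C A c') v'') := by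
    intro c c' v'' v
    induction v'' using TensorProduct.induction_on with
    | zero => simp [mulRight_zero_eq_zero]
    | add z₁ z₂ h₁ h₂ =>
        rw [aux_mulRight_add k A H z₁ z₂, TensorProduct.map_add_right]
        simp only [LinearMap.add_apply, map_add, h₁, h₂]
    | tmul x y =>
        induction v using TensorProduct.induction_on with
        | zero => simp
        | add u₁ u₂ g₁ g₂ => simp only [add_tmul, map_add, LinearMap.add_apply, g₁, g₂]
        | tmul a₀ h =>
            unfold tmulH
            simp only [assoc_tmul, lTensor_tmul, LinearEquiv.coe_coe, assoc_symm_tmul,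
              rTensor_tmul, comm_tmul, coe_comp, LinearMap.comp_apply, mk_apply,
              map₂_apply_tmul, map_tmul, mul_apply']
            rw [hm, aux_tmul_pure k A C ψ c a₀ c' x]
            generalize ψ (a₀ ⊗ₜ c') = w
            induction w using TensorProduct.induction_on with
            | zero => simp
            | tmul d b =>
                simp [Algebra.TensorProduct.tmul_mul_tmul]
            | add w₁ w₂ e₁ e₂ =>
                simp only [tmul_add, add_tmul, map_add, e₁, e₂]
  refine ⟨?_, ?_, ?_, ?_⟩
  · intro p q
    obtain ⟨x, rfl⟩ := hQsurj p
    obtain ⟨y, rfl⟩ := hQsurj q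
    induction x using TensorProduct.induction_on with
    | zero => simp
    | add x₁ x₂ h₁ h₂ => simp only [map_add, LinearMap.add_apply, h₁, h₂]
    | tmul c a =>
        induction y using TensorProduct.induction_on with
        | zero => simp
        | add y₁ y₂ h₁ h₂ => simp only [map_add, h₁, h₂]
        | tmul c' a' =>
            rw [hm, aux_tmul_pure k A C ψ c a c' a', hC1 c a' (ψ (a ⊗ₜ c'))]
            have key := LinearMap.congr_fun hcomod (a ⊗ₜ c')
            simp only [coe_comp, LinearMap.comp_apply, LinearEquiv.coe_coe, rTensor_tmul,
              AlgHom.toLinearMap_apply] at key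
            rw [key, hdb' c a, hdb' c' a']
            exact hFC c c' (δ a') (δ a)
  · have h1 : δ (1 : A) = (1 : A) ⊗ₜ[k] (1 : H) := by
      rw [_root_.map_one δ]; rfl
    rw [hdb' 1 1, h1]
    simp
  · unfold Coassoc
    apply LinearMap.ext
    intro p
    obtain ⟨x, rfl⟩ := hQsurj p
    simp only [coe_comp, LinearMap.comp_apply, LinearEquiv.coe_coe]
    induction x using TensorProduct.induction_on with
    | zero => simp
    | add x₁ x₂ h₁ h₂ => simp only [map_add, h₁, h₂]
    | tmul c a =>
        rw [hdb' c a]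
        have step : ∀ v : A ⊗[k] H,
            (TensorProduct.assoc k ((C ⊗[k] A) ⧸ pushSpan k A C H δ F) H H)
                (rTensor H db (rTensor H (Q ∘ₗ TensorProduct.mk k C A c) v))
              = TensorProduct.map (Q ∘ₗ TensorProduct.mk k C A c) LinearMap.id
                  ((TensorProduct.assoc k A H H) (rTensor H δ.toLinearMap v)) := by
          intro v
          induction v using TensorProduct.induction_on with
          | zero => simp
          | add u₁ u₂ g₁ g₂ => simp only [map_add, g₁, g₂]
          | tmul a₀ h =>
              simp only [rTensor_tmul, coe_comp, LinearMap.comp_apply, mk_apply,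
                AlgHom.toLinearMap_apply]
              rw [hdb' c a₀]
              exact aux_assoc_nat k A H (Q ∘ₗ TensorProduct.mk k C A c) (δ a₀) h
        rw [step (δ a)]
        have key2 := LinearMap.congr_fun hδ.1 a
        simp only [coe_comp, LinearMap.comp_apply, LinearEquiv.coe_coe,
          AlgHom.toLinearMap_apply] at key2
        rw [key2]
        exact aux_comul_nat k A H (Q ∘ₗ TensorProduct.mk k C A c) (δ a)
  · unfold Counital
    apply LinearMap.ext
    intro p
    obtain ⟨x, rfl⟩ := hQsurj p
    simp only [coe_comp, LinearMap.comp_apply, LinearEquiv.coe_coe, id_coe, id_eq]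
    induction x using TensorProduct.induction_on with
    | zero => simp
    | add x₁ x₂ h₁ h₂ => simp only [map_add, h₁, h₂]
    | tmul c a =>
        rw [hdb' c a, aux_counit_nat k A H (Q ∘ₗ TensorProduct.mk k C A c) (δ a)]
        have key3 := LinearMap.congr_fun hδ.2 a
        simp only [coe_comp, LinearMap.comp_apply, LinearEquiv.coe_coe, id_coe, id_eq,
          AlgHom.toLinearMap_apply] at key3
        rw [key3]
        simp
end
end

section
/- Let H be a Hopf algebra, A a right H-comodule algebra with B = A^{coH}, F: B → C an algebra map, and ψ: A⊗C → C⊗A a twisting map which is a right H-comodule morphism and such that \barψ = π_B∘ψ is a B-bimodule morphism satisfying \barψ(1_A⊗c) = c⊗_B1_A, \barψ(a⊗1_C) = 1_C⊗_Ba, and \barψ(a⊗cc') = c^ψ·\barψ(a^ψ⊗c') for all a∈A, c,c'∈C. Then the map (c⊗_Ba)⊗_C(c'⊗_Ba') ↦ c c'^ψ ⊗_B a^ψ ⊗_B a' is a well-defined isomorphism of left C-modules and right H-comodules from (C⊗_BA)⊗_C(C⊗_BA) onto C⊗_B(A⊗_BA), with inverse c⊗_B(a⊗_Ba') ↦ (c⊗_Ba)⊗_C(1_C⊗_Ba').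 -/
open TensorProduct LinearMap Function

noncomputable section
namespace Paper
section Aux
set_option maxHeartbeats 1000000
set_option synthInstance.maxHeartbeats 200000

variable (k : Type*) [Field k] (A : Type*) [Ring A] [Algebra k A]
  (C : Type*) [Ring C] [Algebra k C] (H : Type*) [Ring H] [HopfAlgebra k H]

/-- The raw map `(c⊗a)⊗(c'⊗a') ↦ Σ (c·cᵢ) ⊗ (aᵢ ⊗ a')` where `ψ(a⊗c') = Σ cᵢ⊗aᵢ`. -/
def Phi (ψ : A ⊗[k] C →ₗ[k] C ⊗[k] A) :
    (C ⊗[k] A) ⊗[k] (C ⊗[k] A) →ₗ[k] C ⊗[k] (A ⊗[k] A) :=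
  (TensorProduct.assoc k C A A).toLinearMap
    ∘ₗ rTensor A (rTensor A (LinearMap.mul' k C))
    ∘ₗ rTensor A (TensorProduct.assoc k C C A).symm.toLinearMap
    ∘ₗ (TensorProduct.assoc k C (C ⊗[k] A) A).symm.toLinearMap
    ∘ₗ lTensor C (rTensor A ψ)
    ∘ₗ lTensor C (TensorProduct.assoc k A C A).symm.toLinearMap
    ∘ₗ (TensorProduct.assoc k C A (C ⊗[k] A)).toLinearMap

lemma Phi_tmul (ψ : A ⊗[k] C →ₗ[k] C ⊗[k] A) (c : C) (a : A) (c' : C) (a' : A) :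
    Phi k A C ψ ((c ⊗ₜ a) ⊗ₜ (c' ⊗ₜ a'))
      = TensorProduct.map (mulLeft k c) ((TensorProduct.mk k A A).flip a') (ψ (a ⊗ₜ c')) := by
  have h : ∀ u : C ⊗[k] A,
      (TensorProduct.assoc k C A A).toLinearMap
        (rTensor A (rTensor A (LinearMap.mul' k C))
          (rTensor A (TensorProduct.assoc k C C A).symm.toLinearMap
            ((TensorProduct.assoc k C (C ⊗[k] A) A).symm (c ⊗ₜ (u ⊗ₜ a')))))
      = TensorProduct.map (mulLeft k c) ((TensorProduct.mk k A A).flip a') u := by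
    intro u
    induction u using TensorProduct.induction_on with
    | zero => simp
    | tmul d e => simp
    | add x y hx hy => simp only [TensorProduct.tmul_add, TensorProduct.add_tmul, map_add,
        hx, hy]
  simp only [Phi, coe_comp, Function.comp_apply, LinearEquiv.coe_coe,
    TensorProduct.assoc_tmul, lTensor_tmul, TensorProduct.assoc_symm_tmul, rTensor_tmul]
  exact h (ψ (a ⊗ₜ c'))


variable (δ : A →ₐ[k] A ⊗[k] H) (F : coinv k A H δ →ₐ[k] C)
variable (K10 : Submodule k (C ⊗[k] ((A ⊗[k] A) ⧸ galSpan k A H δ)))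

/-- `u ↦ K10.mkQ ( (c·u₁) ⊗ [u₂ ⊗ a'] )`. -/
def gmap (c : C) (a' : A) :
    C ⊗[k] A →ₗ[k] (C ⊗[k] ((A ⊗[k] A) ⧸ galSpan k A H δ)) ⧸ K10 :=
  K10.mkQ ∘ₗ lTensor C (galQ k A H δ)
    ∘ₗ TensorProduct.map (mulLeft k c) ((TensorProduct.mk k A A).flip a')

lemma gmap_tmul (c : C) (a' : A) (d : C) (e : A) :
    gmap k A C H δ K10 c a' (d ⊗ₜ e)
      = K10.mkQ ((c * d) ⊗ₜ galQ k A H δ (e ⊗ₜ a')) := by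
  simp [gmap]

lemma gmap_mulLeft (c d : C) (a' : A) (u : C ⊗[k] A) :
    gmap k A C H δ K10 c a' (rTensor A (mulLeft k d) u)
      = gmap k A C H δ K10 (c * d) a' u := by
  induction u using TensorProduct.induction_on with
  | zero => simp
  | tmul x y => simp [gmap_tmul, mul_assoc]
  | add x y hx hy => simp only [map_add, hx, hy]

lemma gmap_mulRight (c : C) (b : coinv k A H δ) (a' : A) (u : C ⊗[k] A) :
    gmap k A C H δ K10 c ((b : A) * a') u
      = gmap k A C H δ K10 c a' (lTensor C (mulRight k (b : A)) u) := by
  induction u using TensorProduct.induction_on with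
  | zero => simp
  | tmul d e =>
    simp only [gmap_tmul, lTensor_tmul, mulRight_apply]
    have : galQ k A H δ (e ⊗ₜ ((b : A) * a')) = galQ k A H δ ((e * (b : A)) ⊗ₜ a') := by
      simp only [galQ, Submodule.mkQ_apply]
      rw [Submodule.Quotient.eq]
      apply Submodule.subset_span
      exact ⟨e, b, a', rfl⟩
    rw [this]
  | add x y hx hy => simp only [map_add, hx, hy]


variable (ψ : A ⊗[k] C →ₗ[k] C ⊗[k] A)

/-- Specification of the submodule `K10`. -/
def KSpec : Prop :=
  K10 = Submodule.span k {z | ∃ (c : C) (b : coinv k A H δ) (x : A ⊗[k] A),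
      z = c ⊗ₜ (galQ k A H δ (rTensor A (LinearMap.mulLeft k (b : A)) x))
          - (c * F b) ⊗ₜ (galQ k A H δ x)}

lemma gmap_kills (hK : KSpec k A C H δ F K10) (c : C) (a' : A) :
    ∀ u ∈ pushSpan k A C H δ F, gmap k A C H δ K10 c a' u = 0 := by
  intro u hu
  simp only [pushSpan, relSpan] at hu
  induction hu using Submodule.span_induction with
  | mem x hx =>
    obtain ⟨c₀, b, a, rfl⟩ := hx
    simp only [map_sub, gmap_tmul]
    rw [← map_sub, Submodule.mkQ_apply, Submodule.Quotient.mk_eq_zero, hK]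
    apply Submodule.subset_span
    refine ⟨c * c₀, b, a ⊗ₜ a', ?_⟩
    simp only [rTensor_tmul, mulLeft_apply, mul_assoc]
  | zero => simp
  | add x y hx hy ihx ihy => rw [map_add, ihx, ihy, add_zero]
  | smul t x hx ih => rw [map_smul, ih, smul_zero]

lemma gmap_eqP (hK : KSpec k A C H δ F K10) (c : C) (a' : A) {u w : C ⊗[k] A}
    (h : u - w ∈ pushSpan k A C H δ F) :
    gmap k A C H δ K10 c a' u = gmap k A C H δ K10 c a' w := by
  have := gmap_kills k A C H δ F K10 hK c a' (u - w) h
  rw [map_sub, sub_eq_zero] at this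
  exact this

/-- The raw forward map `(C⊗A)⊗(C⊗A) → (C ⊗ (A⊗A)/G) / K10`. -/
def F0 : (C ⊗[k] A) ⊗[k] (C ⊗[k] A) →ₗ[k] (C ⊗[k] ((A ⊗[k] A) ⧸ galSpan k A H δ)) ⧸ K10 :=
  K10.mkQ ∘ₗ lTensor C (galQ k A H δ) ∘ₗ Phi k A C ψ

lemma F0_tmul (c : C) (a : A) (c' : C) (a' : A) :
    F0 k A C H δ K10 ψ ((c ⊗ₜ a) ⊗ₜ (c' ⊗ₜ a'))
      = gmap k A C H δ K10 c a' (ψ (a ⊗ₜ c')) := by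
  simp only [F0, coe_comp, Function.comp_apply, Phi_tmul, gmap]

lemma mem_d1 (hbar : BarBimod k A C H δ F ψ) (b : coinv k A H δ) (a : A) (c : C) :
    ψ (((b : A) * a) ⊗ₜ c) - rTensor A (mulLeft k (F b)) (ψ (a ⊗ₜ c))
      ∈ pushSpan k A C H δ F := by
  have h := hbar.1 b a c
  simp only [pushQ, Submodule.mkQ_apply] at h
  exact (Submodule.Quotient.eq _).mp h

lemma mem_d2 (hbar : BarBimod k A C H δ F ψ) (b : coinv k A H δ) (a : A) (c : C) :
    ψ (a ⊗ₜ (c * F b)) - lTensor C (mulRight k (b : A)) (ψ (a ⊗ₜ c))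
      ∈ pushSpan k A C H δ F := by
  have h := hbar.2 b a c
  simp only [pushQ, Submodule.mkQ_apply] at h
  exact (Submodule.Quotient.eq _).mp h

lemma mem_d3 (hnor : BarNormal k A C H δ F ψ) (a : A) :
    ψ (a ⊗ₜ (1 : C)) - (1 : C) ⊗ₜ a ∈ pushSpan k A C H δ F := by
  have h := hnor.2 a
  simp only [pushQ, Submodule.mkQ_apply] at h
  exact (Submodule.Quotient.eq _).mp h

lemma F0_kill_left (hbar : BarBimod k A C H δ F ψ) (hK : KSpec k A C H δ F K10) :
    ∀ v ∈ pushSpan k A C H δ F, ∀ y : C ⊗[k] A, F0 k A C H δ K10 ψ (v ⊗ₜ y) = 0 := by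
  intro v hv
  simp only [pushSpan, relSpan] at hv
  induction hv using Submodule.span_induction with
  | mem x hx =>
    obtain ⟨c₀, b, a, rfl⟩ := hx
    intro y
    induction y using TensorProduct.induction_on with
    | zero => simp
    | tmul c' a' =>
      rw [TensorProduct.sub_tmul, map_sub, F0_tmul, F0_tmul,
        gmap_eqP k A C H δ F K10 hK c₀ a' (mem_d1 k A C H δ F ψ hbar b a c'),
        gmap_mulLeft, sub_self]
    | add y₁ y₂ h₁ h₂ =>
      rw [TensorProduct.tmul_add, map_add, h₁, h₂, add_zero]
  | zero => intro y; simp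
  | add x₁ x₂ hx₁ hx₂ ih₁ ih₂ =>
    intro y
    rw [TensorProduct.add_tmul, map_add, ih₁ y, ih₂ y, add_zero]
  | smul t x hx ih =>
    intro y
    rw [← TensorProduct.smul_tmul', map_smul, ih y, smul_zero]

lemma F0_kill_right (hbar : BarBimod k A C H δ F ψ) (hK : KSpec k A C H δ F K10) :
    ∀ v ∈ pushSpan k A C H δ F, ∀ x : C ⊗[k] A, F0 k A C H δ K10 ψ (x ⊗ₜ v) = 0 := by
  intro v hv
  simp only [pushSpan, relSpan] at hv
  induction hv using Submodule.span_induction with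
  | mem z hz =>
    obtain ⟨c₀, b, a', rfl⟩ := hz
    intro x
    induction x using TensorProduct.induction_on with
    | zero => simp
    | tmul c a =>
      rw [TensorProduct.tmul_sub, map_sub, F0_tmul, F0_tmul,
        gmap_eqP k A C H δ F K10 hK c a' (mem_d2 k A C H δ F ψ hbar b a c₀),
        gmap_mulRight, sub_self]
    | add x₁ x₂ h₁ h₂ =>
      rw [TensorProduct.add_tmul, map_add, h₁, h₂, add_zero]
  | zero => intro x; simp
  | add x₁ x₂ hx₁ hx₂ ih₁ ih₂ =>
    intro y
    rw [TensorProduct.tmul_add, map_add, ih₁ y, ih₂ y, add_zero]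
  | smul t x hx ih =>
    intro y
    rw [TensorProduct.tmul_smul, map_smul, ih y, smul_zero]


lemma F0_ker_J (hbar : BarBimod k A C H δ F ψ) (hK : KSpec k A C H δ F K10) :
    (LinearMap.range (TensorProduct.map (pushSpan k A C H δ F).subtype
        (LinearMap.id : C ⊗[k] A →ₗ[k] C ⊗[k] A)) ⊔
      LinearMap.range (TensorProduct.map (LinearMap.id : C ⊗[k] A →ₗ[k] C ⊗[k] A)
        (pushSpan k A C H δ F).subtype))
      ≤ ker (F0 k A C H δ K10 ψ) := by
  apply sup_le
  · rw [LinearMap.range_le_ker_iff]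
    apply TensorProduct.ext'
    intro p y
    simpa using F0_kill_left k A C H δ F K10 ψ hbar hK (p : C ⊗[k] A) p.2 y
  · rw [LinearMap.range_le_ker_iff]
    apply TensorProduct.ext'
    intro x p
    simpa using F0_kill_right k A C H δ F K10 ψ hbar hK (p : C ⊗[k] A) p.2 x

/-- The forward map on `((C⊗A)/P) ⊗ ((C⊗A)/P)`. -/
def F2 (hbar : BarBimod k A C H δ F ψ) (hK : KSpec k A C H δ F K10) :
    (((C ⊗[k] A) ⧸ pushSpan k A C H δ F) ⊗[k] ((C ⊗[k] A) ⧸ pushSpan k A C H δ F))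
      →ₗ[k] (C ⊗[k] ((A ⊗[k] A) ⧸ galSpan k A H δ)) ⧸ K10 :=
  (Submodule.liftQ _ (F0 k A C H δ K10 ψ) (F0_ker_J k A C H δ F K10 ψ hbar hK))
    ∘ₗ (TensorProduct.quotientTensorQuotientEquiv (pushSpan k A C H δ F)
        (pushSpan k A C H δ F)).toLinearMap

lemma F2_mk (hbar : BarBimod k A C H δ F ψ) (hK : KSpec k A C H δ F K10)
    (x y : C ⊗[k] A) :
    F2 k A C H δ F K10 ψ hbar hK (pushQ k A C H δ F x ⊗ₜ pushQ k A C H δ F y)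
      = F0 k A C H δ K10 ψ (x ⊗ₜ y) := by
  simp only [F2, pushQ, Submodule.mkQ_apply, coe_comp, Function.comp_apply,
    LinearEquiv.coe_coe, TensorProduct.quotientTensorQuotientEquiv_apply_tmul_mk_tmul_mk,
    Submodule.liftQ_apply]

variable (σ : C →ₗ[k] ((C ⊗[k] A) ⧸ pushSpan k A C H δ F)
      →ₗ[k] ((C ⊗[k] A) ⧸ pushSpan k A C H δ F))

lemma distkey (hσ : SigmaSpec k A C H δ F σ) (hdist : BarDistrib k A C H δ F ψ σ)
    (hK : KSpec k A C H δ F K10) (c c'' c' : C) (a a' : A) :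
    gmap k A C H δ K10 c a' (ψ (a ⊗ₜ (c'' * c')))
      = F0 k A C H δ K10 ψ ((rTensor A (mulLeft k c) (ψ (a ⊗ₜ c''))) ⊗ₜ (c' ⊗ₜ a')) := by
  have hkill : pushSpan k A C H δ F ≤ ker (gmap k A C H δ K10 c a') := fun u hu =>
    LinearMap.mem_ker.mpr (gmap_kills k A C H δ F K10 hK c a' u hu)
  set GQ := Submodule.liftQ _ (gmap k A C H δ K10 c a') hkill with hGQ
  have hGQmk : ∀ v : C ⊗[k] A, GQ (pushQ k A C H δ F v) = gmap k A C H δ K10 c a' v := by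
    intro v
    simp only [hGQ, pushQ, Submodule.mkQ_apply, Submodule.liftQ_apply]
  have hd := LinearMap.congr_fun hdist (a ⊗ₜ (c'' ⊗ₜ c'))
  simp only [coe_comp, Function.comp_apply, lTensor_tmul, mul'_apply, LinearEquiv.coe_coe,
    TensorProduct.assoc_symm_tmul, rTensor_tmul] at hd
  have key : ∀ u : C ⊗[k] A,
      GQ (TensorProduct.lift σ
          (lTensor C (pushQ k A C H δ F ∘ₗ ψ) ((TensorProduct.assoc k C A C) (u ⊗ₜ c'))))
        = F0 k A C H δ K10 ψ ((rTensor A (mulLeft k c) u) ⊗ₜ (c' ⊗ₜ a')) := by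
    intro u
    induction u using TensorProduct.induction_on with
    | zero => simp
    | tmul d e =>
      simp only [TensorProduct.assoc_tmul, lTensor_tmul, coe_comp, Function.comp_apply,
        TensorProduct.lift.tmul, rTensor_tmul, mulLeft_apply, F0_tmul]
      rw [hσ d (ψ (e ⊗ₜ c')), hGQmk, gmap_mulLeft]
    | add u₁ u₂ h₁ h₂ =>
      simp only [TensorProduct.add_tmul, map_add, h₁, h₂]
  calc gmap k A C H δ K10 c a' (ψ (a ⊗ₜ (c'' * c')))
      = GQ (pushQ k A C H δ F (ψ (a ⊗ₜ (c'' * c')))) := (hGQmk _).symm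
    _ = GQ (TensorProduct.lift σ
          (lTensor C (pushQ k A C H δ F ∘ₗ ψ)
            ((TensorProduct.assoc k C A C) ((ψ (a ⊗ₜ c'')) ⊗ₜ c')))) := by
        rw [show pushQ k A C H δ F (ψ (a ⊗ₜ (c'' * c')))
            = (pushQ k A C H δ F ∘ₗ ψ) (a ⊗ₜ (c'' * c')) from rfl]
        rw [show (pushQ k A C H δ F ∘ₗ ψ) (a ⊗ₜ (c'' * c'))
            = ((pushQ k A C H δ F ∘ₗ ψ) ∘ₗ lTensor A (LinearMap.mul' k C))
              (a ⊗ₜ (c'' ⊗ₜ c')) by simp]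
        rw [hdist]
        simp
    _ = F0 k A C H δ K10 ψ ((rTensor A (mulLeft k c) (ψ (a ⊗ₜ c''))) ⊗ₜ (c' ⊗ₜ a')) :=
        key _

/-- Specification of the submodule `I10`. -/
def ISpec (I10 : Submodule k (((C ⊗[k] A) ⧸ pushSpan k A C H δ F) ⊗[k]
    ((C ⊗[k] A) ⧸ pushSpan k A C H δ F))) : Prop :=
  I10 = Submodule.span k {z | ∃ (a a' : A) (c c' c'' : C),
      z = (pushQ k A C H δ F (c ⊗ₜ a)) ⊗ₜ (pushQ k A C H δ F ((c'' * c') ⊗ₜ a'))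
          - (pushQ k A C H δ F (rTensor A (LinearMap.mulLeft k c) (ψ (a ⊗ₜ c''))))
              ⊗ₜ (pushQ k A C H δ F (c' ⊗ₜ a'))}

lemma F2_ker_I (hbar : BarBimod k A C H δ F ψ) (hK : KSpec k A C H δ F K10)
    (hσ : SigmaSpec k A C H δ F σ) (hdist : BarDistrib k A C H δ F ψ σ)
    (I10 : Submodule k (((C ⊗[k] A) ⧸ pushSpan k A C H δ F) ⊗[k]
      ((C ⊗[k] A) ⧸ pushSpan k A C H δ F)))
    (hI : ISpec k A C H δ F ψ I10) :
    I10 ≤ ker (F2 k A C H δ F K10 ψ hbar hK) := by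
  rw [hI]
  rw [Submodule.span_le]
  rintro z ⟨a, a', c, c', c'', rfl⟩
  rw [SetLike.mem_coe, LinearMap.mem_ker, map_sub, F2_mk, F2_mk, F0_tmul,
    distkey k A C H δ F K10 ψ σ hσ hdist hK c c'' c' a a', sub_self]


/-- The forward map on the quotient by `I10`. -/
def phiFwd (hbar : BarBimod k A C H δ F ψ) (hK : KSpec k A C H δ F K10)
    (hσ : SigmaSpec k A C H δ F σ) (hdist : BarDistrib k A C H δ F ψ σ)
    (I10 : Submodule k (((C ⊗[k] A) ⧸ pushSpan k A C H δ F) ⊗[k]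
      ((C ⊗[k] A) ⧸ pushSpan k A C H δ F)))
    (hI : ISpec k A C H δ F ψ I10) :
    ((((C ⊗[k] A) ⧸ pushSpan k A C H δ F) ⊗[k]
      ((C ⊗[k] A) ⧸ pushSpan k A C H δ F)) ⧸ I10)
      →ₗ[k] (C ⊗[k] ((A ⊗[k] A) ⧸ galSpan k A H δ)) ⧸ K10 :=
  Submodule.liftQ _ (F2 k A C H δ F K10 ψ hbar hK)
    (F2_ker_I k A C H δ F K10 ψ σ hbar hK hσ hdist I10 hI)

lemma phiFwd_mk (hbar : BarBimod k A C H δ F ψ) (hK : KSpec k A C H δ F K10)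
    (hσ : SigmaSpec k A C H δ F σ) (hdist : BarDistrib k A C H δ F ψ σ)
    (I10 : Submodule k (((C ⊗[k] A) ⧸ pushSpan k A C H δ F) ⊗[k]
      ((C ⊗[k] A) ⧸ pushSpan k A C H δ F)))
    (hI : ISpec k A C H δ F ψ I10) (x y : C ⊗[k] A) :
    phiFwd k A C H δ F K10 ψ σ hbar hK hσ hdist I10 hI
        (I10.mkQ (pushQ k A C H δ F x ⊗ₜ pushQ k A C H δ F y))
      = F0 k A C H δ K10 ψ (x ⊗ₜ y) := by
  simp only [phiFwd, Submodule.mkQ_apply, Submodule.liftQ_apply, F2_mk]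

/-- The raw backward map `C ⊗ (A⊗A) → ((C⊗A)/P ⊗ (C⊗A)/P) ⧸ I10`. -/
def H0 (I10 : Submodule k (((C ⊗[k] A) ⧸ pushSpan k A C H δ F) ⊗[k]
    ((C ⊗[k] A) ⧸ pushSpan k A C H δ F))) :
    C ⊗[k] (A ⊗[k] A) →ₗ[k]
      ((((C ⊗[k] A) ⧸ pushSpan k A C H δ F) ⊗[k]
        ((C ⊗[k] A) ⧸ pushSpan k A C H δ F)) ⧸ I10) :=
  I10.mkQ
    ∘ₗ TensorProduct.map (pushQ k A C H δ F)
        ((pushQ k A C H δ F) ∘ₗ TensorProduct.mk k C A 1)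
    ∘ₗ (TensorProduct.assoc k C A A).symm.toLinearMap

lemma H0_tmul (I10) (c : C) (a a' : A) :
    H0 k A C H δ F I10 (c ⊗ₜ (a ⊗ₜ a'))
      = I10.mkQ (pushQ k A C H δ F (c ⊗ₜ a) ⊗ₜ pushQ k A C H δ F ((1 : C) ⊗ₜ a')) := by
  simp only [H0, coe_comp, Function.comp_apply, LinearEquiv.coe_coe,
    TensorProduct.assoc_symm_tmul, TensorProduct.map_tmul, TensorProduct.mk_apply]

lemma Pstab_l (c : C) {u : C ⊗[k] A} (hu : u ∈ pushSpan k A C H δ F) :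
    rTensor A (mulLeft k c) u ∈ pushSpan k A C H δ F := by
  simp only [pushSpan, relSpan] at hu ⊢
  induction hu using Submodule.span_induction with
  | mem x hx =>
    obtain ⟨c₀, b, a, rfl⟩ := hx
    rw [map_sub]
    apply Submodule.subset_span
    exact ⟨c * c₀, b, a, by simp [mul_assoc]⟩
  | zero => simp
  | add x y hx hy ihx ihy => rw [map_add]; exact Submodule.add_mem _ ihx ihy
  | smul t x hx ih => rw [map_smul]; exact Submodule.smul_mem _ t ih

lemma Pstab_r (b' : A) {u : C ⊗[k] A} (hu : u ∈ pushSpan k A C H δ F) :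
    lTensor C (mulRight k b') u ∈ pushSpan k A C H δ F := by
  simp only [pushSpan, relSpan] at hu ⊢
  induction hu using Submodule.span_induction with
  | mem x hx =>
    obtain ⟨c₀, b, a, rfl⟩ := hx
    rw [map_sub]
    apply Submodule.subset_span
    exact ⟨c₀, b, a * b', by simp [mul_assoc]⟩
  | zero => simp
  | add x y hx hy ihx ihy => rw [map_add]; exact Submodule.add_mem _ ihx ihy
  | smul t x hx ih => rw [map_smul]; exact Submodule.smul_mem _ t ih

lemma mem_s1 (hbar : BarBimod k A C H δ F ψ) (hnor : BarNormal k A C H δ F ψ)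
    (b : coinv k A H δ) (x : A) :
    ψ (x ⊗ₜ F b) - (1 : C) ⊗ₜ (x * (b : A)) ∈ pushSpan k A C H δ F := by
  have h1 : ψ (x ⊗ₜ F b) - lTensor C (mulRight k (b : A)) (ψ (x ⊗ₜ (1 : C)))
      ∈ pushSpan k A C H δ F := by
    have := mem_d2 k A C H δ F ψ hbar b x 1
    rwa [one_mul] at this
  have h2 : lTensor C (mulRight k (b : A)) (ψ (x ⊗ₜ (1 : C)))
      - (1 : C) ⊗ₜ (x * (b : A)) ∈ pushSpan k A C H δ F := by
    have := Pstab_r k A C H δ F (b : A) (mem_d3 k A C H δ F ψ hnor x)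
    rw [map_sub] at this
    simpa using this
  have := Submodule.add_mem _ h1 h2
  rwa [sub_add_sub_cancel] at this

lemma mem_s2 (hbar : BarBimod k A C H δ F ψ) (hnor : BarNormal k A C H δ F ψ)
    (c : C) (b : coinv k A H δ) (x : A) :
    rTensor A (mulLeft k c) (ψ (x ⊗ₜ F b)) - c ⊗ₜ (x * (b : A))
      ∈ pushSpan k A C H δ F := by
  have := Pstab_l k A C H δ F c (mem_s1 k A C H δ F ψ hbar hnor b x)
  rw [map_sub] at this
  simpa [mul_one] using this

lemma H0_kill (hbar : BarBimod k A C H δ F ψ) (hnor : BarNormal k A C H δ F ψ)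
    (I10 : Submodule k (((C ⊗[k] A) ⧸ pushSpan k A C H δ F) ⊗[k]
      ((C ⊗[k] A) ⧸ pushSpan k A C H δ F)))
    (hI : ISpec k A C H δ F ψ I10) :
    ∀ z ∈ galSpan k A H δ, ∀ c : C, H0 k A C H δ F I10 (c ⊗ₜ z) = 0 := by
  intro z hz
  simp only [galSpan, relSpan] at hz
  induction hz using Submodule.span_induction with
  | mem w hw =>
    obtain ⟨x, b, y, rfl⟩ := hw
    intro c
    rw [TensorProduct.tmul_sub, map_sub, H0_tmul, H0_tmul]
    simp only [Subalgebra.coe_val]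
    have e1 : pushQ k A C H δ F ((1 : C) ⊗ₜ ((b : A) * y))
        = pushQ k A C H δ F ((F b * 1) ⊗ₜ y) := by
      simp only [pushQ, Submodule.mkQ_apply]
      rw [Submodule.Quotient.eq]
      apply Submodule.subset_span
      exact ⟨1, b, y, by rw [mul_one, one_mul]⟩
    have e2 : pushQ k A C H δ F (c ⊗ₜ (x * (b : A)))
        = pushQ k A C H δ F (rTensor A (mulLeft k c) (ψ (x ⊗ₜ F b))) := by
      simp only [pushQ, Submodule.mkQ_apply]
      rw [Submodule.Quotient.eq, ← neg_sub, neg_mem_iff]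
      exact mem_s2 k A C H δ F ψ hbar hnor c b x
    rw [e1, e2, ← map_sub, Submodule.mkQ_apply, Submodule.Quotient.mk_eq_zero, hI]
    apply Submodule.subset_span
    exact ⟨x, y, c, 1, F b, rfl⟩
  | zero => intro c; simp
  | add z₁ z₂ hz₁ hz₂ ih₁ ih₂ =>
    intro c
    rw [TensorProduct.tmul_add, map_add, ih₁ c, ih₂ c, add_zero]
  | smul t z hz ih =>
    intro c
    rw [TensorProduct.tmul_smul, map_smul, ih c, smul_zero]

lemma H0_ker (hbar : BarBimod k A C H δ F ψ) (hnor : BarNormal k A C H δ F ψ)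
    (I10 : Submodule k (((C ⊗[k] A) ⧸ pushSpan k A C H δ F) ⊗[k]
      ((C ⊗[k] A) ⧸ pushSpan k A C H δ F)))
    (hI : ISpec k A C H δ F ψ I10) :
    LinearMap.range (TensorProduct.map (LinearMap.id : C →ₗ[k] C)
        (galSpan k A H δ).subtype)
      ≤ ker (H0 k A C H δ F I10) := by
  rw [LinearMap.range_le_ker_iff]
  apply TensorProduct.ext'
  intro c g
  simpa using H0_kill k A C H δ F ψ hbar hnor I10 hI (g : A ⊗[k] A) g.2 c

/-- The backward map. -/
def phiBwdAux (hbar : BarBimod k A C H δ F ψ) (hnor : BarNormal k A C H δ F ψ)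
    (I10 : Submodule k (((C ⊗[k] A) ⧸ pushSpan k A C H δ F) ⊗[k]
      ((C ⊗[k] A) ⧸ pushSpan k A C H δ F)))
    (hI : ISpec k A C H δ F ψ I10) :
    C ⊗[k] ((A ⊗[k] A) ⧸ galSpan k A H δ) →ₗ[k]
      ((((C ⊗[k] A) ⧸ pushSpan k A C H δ F) ⊗[k]
        ((C ⊗[k] A) ⧸ pushSpan k A C H δ F)) ⧸ I10) :=
  (Submodule.liftQ _ (H0 k A C H δ F I10) (H0_ker k A C H δ F ψ hbar hnor I10 hI))
    ∘ₗ (TensorProduct.tensorQuotientEquiv C (galSpan k A H δ)).toLinearMap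

lemma phiBwdAux_tmul (hbar : BarBimod k A C H δ F ψ) (hnor : BarNormal k A C H δ F ψ)
    (I10) (hI : ISpec k A C H δ F ψ I10) (c : C) (z : A ⊗[k] A) :
    phiBwdAux k A C H δ F ψ hbar hnor I10 hI (c ⊗ₜ galQ k A H δ z)
      = H0 k A C H δ F I10 (c ⊗ₜ z) := by
  simp only [phiBwdAux, galQ, Submodule.mkQ_apply, coe_comp, Function.comp_apply,
    LinearEquiv.coe_coe, TensorProduct.tensorQuotientEquiv_apply_mk_tmul,
    Submodule.liftQ_apply]


lemma phiBwdAux_ker (hbar : BarBimod k A C H δ F ψ) (hnor : BarNormal k A C H δ F ψ)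
    (I10) (hI : ISpec k A C H δ F ψ I10) (hK : KSpec k A C H δ F K10) :
    K10 ≤ ker (phiBwdAux k A C H δ F ψ hbar hnor I10 hI) := by
  rw [hK, Submodule.span_le]
  rintro z ⟨c, b, x, rfl⟩
  rw [SetLike.mem_coe, LinearMap.mem_ker, map_sub, phiBwdAux_tmul, phiBwdAux_tmul]
  have claim : ∀ x : A ⊗[k] A,
      H0 k A C H δ F I10 (c ⊗ₜ (rTensor A (mulLeft k (b : A)) x))
        = H0 k A C H δ F I10 ((c * F b) ⊗ₜ x) := by
    intro x
    induction x using TensorProduct.induction_on with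
    | zero => simp
    | tmul a a' =>
      rw [rTensor_tmul, mulLeft_apply, H0_tmul, H0_tmul]
      have : pushQ k A C H δ F (c ⊗ₜ ((b : A) * a))
          = pushQ k A C H δ F ((c * F b) ⊗ₜ a) := by
        simp only [pushQ, Submodule.mkQ_apply]
        rw [Submodule.Quotient.eq]
        exact Submodule.subset_span ⟨c, b, a, rfl⟩
      rw [this]
    | add x₁ x₂ h₁ h₂ =>
      rw [map_add, TensorProduct.tmul_add, TensorProduct.tmul_add, map_add, map_add, h₁, h₂]
  rw [claim, sub_self]

/-- The backward map on the quotient by `K10`. -/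
def phiBwd (hbar : BarBimod k A C H δ F ψ) (hnor : BarNormal k A C H δ F ψ)
    (I10) (hI : ISpec k A C H δ F ψ I10) (hK : KSpec k A C H δ F K10) :
    ((C ⊗[k] ((A ⊗[k] A) ⧸ galSpan k A H δ)) ⧸ K10) →ₗ[k]
      ((((C ⊗[k] A) ⧸ pushSpan k A C H δ F) ⊗[k]
        ((C ⊗[k] A) ⧸ pushSpan k A C H δ F)) ⧸ I10) :=
  K10.liftQ (phiBwdAux k A C H δ F ψ hbar hnor I10 hI)
    (phiBwdAux_ker k A C H δ F K10 ψ hbar hnor I10 hI hK)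

lemma phiBwd_mk (hbar : BarBimod k A C H δ F ψ) (hnor : BarNormal k A C H δ F ψ)
    (I10) (hI : ISpec k A C H δ F ψ I10) (hK : KSpec k A C H δ F K10)
    (c : C) (z : A ⊗[k] A) :
    phiBwd k A C H δ F K10 ψ hbar hnor I10 hI hK (K10.mkQ (c ⊗ₜ galQ k A H δ z))
      = H0 k A C H δ F I10 (c ⊗ₜ z) := by
  rw [phiBwd, Submodule.mkQ_apply, Submodule.liftQ_apply, phiBwdAux_tmul]

lemma bwd_gmap (hbar : BarBimod k A C H δ F ψ) (hnor : BarNormal k A C H δ F ψ)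
    (I10) (hI : ISpec k A C H δ F ψ I10) (hK : KSpec k A C H δ F K10)
    (c : C) (a' : A) (u : C ⊗[k] A) :
    phiBwd k A C H δ F K10 ψ hbar hnor I10 hI hK (gmap k A C H δ K10 c a' u)
      = I10.mkQ (pushQ k A C H δ F (rTensor A (mulLeft k c) u)
          ⊗ₜ pushQ k A C H δ F ((1 : C) ⊗ₜ a')) := by
  induction u using TensorProduct.induction_on with
  | zero => simp
  | tmul d e =>
    rw [gmap_tmul, phiBwd_mk, H0_tmul, rTensor_tmul, mulLeft_apply]
  | add u₁ u₂ h₁ h₂ =>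
    rw [map_add, map_add, h₁, h₂, map_add, map_add, TensorProduct.add_tmul, map_add]


lemma bwd_F0 (hbar : BarBimod k A C H δ F ψ) (hnor : BarNormal k A C H δ F ψ)
    (I10) (hI : ISpec k A C H δ F ψ I10) (hK : KSpec k A C H δ F K10)
    (x y : C ⊗[k] A) :
    phiBwd k A C H δ F K10 ψ hbar hnor I10 hI hK (F0 k A C H δ K10 ψ (x ⊗ₜ y))
      = I10.mkQ (pushQ k A C H δ F x ⊗ₜ pushQ k A C H δ F y) := by
  induction x using TensorProduct.induction_on with
  | zero => simp
  | tmul c a =>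
    induction y using TensorProduct.induction_on with
    | zero => simp
    | tmul c' a' =>
      rw [F0_tmul, bwd_gmap, Submodule.mkQ_apply, Submodule.mkQ_apply,
        Submodule.Quotient.eq, ← neg_sub, neg_mem_iff, hI]
      apply Submodule.subset_span
      exact ⟨a, a', c, 1, c', by rw [mul_one]⟩
    | add y₁ y₂ h₁ h₂ =>
      simp only [TensorProduct.tmul_add, TensorProduct.add_tmul, map_add, h₁, h₂]
  | add x₁ x₂ h₁ h₂ =>
    simp only [TensorProduct.tmul_add, TensorProduct.add_tmul, map_add, h₁, h₂]

lemma fwd_H0 (hbar : BarBimod k A C H δ F ψ) (hnor : BarNormal k A C H δ F ψ)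
    (hσ : SigmaSpec k A C H δ F σ) (hdist : BarDistrib k A C H δ F ψ σ)
    (I10) (hI : ISpec k A C H δ F ψ I10) (hK : KSpec k A C H δ F K10)
    (c : C) (z : A ⊗[k] A) :
    phiFwd k A C H δ F K10 ψ σ hbar hK hσ hdist I10 hI (H0 k A C H δ F I10 (c ⊗ₜ z))
      = K10.mkQ (c ⊗ₜ galQ k A H δ z) := by
  induction z using TensorProduct.induction_on with
  | zero => simp
  | tmul a a' =>
    rw [H0_tmul, phiFwd_mk, F0_tmul,
      gmap_eqP k A C H δ F K10 hK c a' (mem_d3 k A C H δ F ψ hnor a),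
      gmap_tmul, mul_one]
  | add z₁ z₂ h₁ h₂ =>
    simp only [TensorProduct.tmul_add, map_add, h₁, h₂]

lemma bwd_fwd_id (hbar : BarBimod k A C H δ F ψ) (hnor : BarNormal k A C H δ F ψ)
    (hσ : SigmaSpec k A C H δ F σ) (hdist : BarDistrib k A C H δ F ψ σ)
    (I10) (hI : ISpec k A C H δ F ψ I10) (hK : KSpec k A C H δ F K10) :
    (phiBwd k A C H δ F K10 ψ hbar hnor I10 hI hK)
        ∘ₗ (phiFwd k A C H δ F K10 ψ σ hbar hK hσ hdist I10 hI) = LinearMap.id := by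
  have hs : Function.Surjective
      ⇑(I10.mkQ ∘ₗ TensorProduct.map (pushQ k A C H δ F) (pushQ k A C H δ F)) := by
    rw [coe_comp]
    exact (Submodule.mkQ_surjective I10).comp
      (TensorProduct.map_surjective (Submodule.mkQ_surjective _) (Submodule.mkQ_surjective _))
  rw [← LinearMap.cancel_right hs]
  apply TensorProduct.ext'
  intro x y
  simp only [coe_comp, Function.comp_apply, TensorProduct.map_tmul, id_coe, id_eq]
  rw [phiFwd_mk, bwd_F0]

lemma fwd_bwd_id (hbar : BarBimod k A C H δ F ψ) (hnor : BarNormal k A C H δ F ψ)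
    (hσ : SigmaSpec k A C H δ F σ) (hdist : BarDistrib k A C H δ F ψ σ)
    (I10) (hI : ISpec k A C H δ F ψ I10) (hK : KSpec k A C H δ F K10) :
    (phiFwd k A C H δ F K10 ψ σ hbar hK hσ hdist I10 hI)
        ∘ₗ (phiBwd k A C H δ F K10 ψ hbar hnor I10 hI hK) = LinearMap.id := by
  have hs : Function.Surjective
      ⇑(K10.mkQ ∘ₗ lTensor C (galQ k A H δ)) := by
    rw [coe_comp]
    exact (Submodule.mkQ_surjective K10).comp
      (LinearMap.lTensor_surjective C (Submodule.mkQ_surjective _))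
  rw [← LinearMap.cancel_right hs]
  apply TensorProduct.ext'
  intro c z
  simp only [coe_comp, Function.comp_apply, lTensor_tmul, id_coe, id_eq]
  rw [phiBwd_mk, fwd_H0 k A C H δ F K10 ψ σ hbar hnor hσ hdist I10 hI hK]


lemma sig2_gmap
    (σ2 : C →ₗ[k] ((C ⊗[k] ((A ⊗[k] A) ⧸ galSpan k A H δ)) ⧸ K10) →ₗ[k]
      ((C ⊗[k] ((A ⊗[k] A) ⧸ galSpan k A H δ)) ⧸ K10))
    (hσ2 : ∀ (c₀ c : C) (t : (A ⊗[k] A) ⧸ galSpan k A H δ),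
      σ2 c₀ (K10.mkQ (c ⊗ₜ t)) = K10.mkQ ((c₀ * c) ⊗ₜ t))
    (c₀ c : C) (a' : A) (u : C ⊗[k] A) :
    σ2 c₀ (gmap k A C H δ K10 c a' u) = gmap k A C H δ K10 (c₀ * c) a' u := by
  induction u using TensorProduct.induction_on with
  | zero => simp
  | tmul d e => rw [gmap_tmul, hσ2, gmap_tmul, mul_assoc]
  | add u₁ u₂ h₁ h₂ => rw [map_add, map_add, h₁, h₂, map_add]

lemma sig2_F0
    (σ2 : C →ₗ[k] ((C ⊗[k] ((A ⊗[k] A) ⧸ galSpan k A H δ)) ⧸ K10) →ₗ[k]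
      ((C ⊗[k] ((A ⊗[k] A) ⧸ galSpan k A H δ)) ⧸ K10))
    (hσ2 : ∀ (c₀ c : C) (t : (A ⊗[k] A) ⧸ galSpan k A H δ),
      σ2 c₀ (K10.mkQ (c ⊗ₜ t)) = K10.mkQ ((c₀ * c) ⊗ₜ t))
    (c₀ : C) (x y : C ⊗[k] A) :
    σ2 c₀ (F0 k A C H δ K10 ψ (x ⊗ₜ y))
      = F0 k A C H δ K10 ψ ((rTensor A (mulLeft k c₀) x) ⊗ₜ y) := by
  induction x using TensorProduct.induction_on with
  | zero => simp
  | tmul c a =>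
    induction y using TensorProduct.induction_on with
    | zero => simp
    | tmul c' a' =>
      rw [F0_tmul, sig2_gmap k A C H δ K10 σ2 hσ2, rTensor_tmul, mulLeft_apply, F0_tmul]
    | add y₁ y₂ h₁ h₂ =>
      simp only [TensorProduct.tmul_add, map_add, h₁, h₂]
  | add x₁ x₂ h₁ h₂ =>
    simp only [TensorProduct.add_tmul, map_add, h₁, h₂]

/-- Auxiliary map for the comodule compatibility. -/
def Theta (c : C) :
    (C ⊗[k] A) ⊗[k] (A ⊗[k] H) →ₗ[k]
      ((C ⊗[k] ((A ⊗[k] A) ⧸ galSpan k A H δ)) ⧸ K10) ⊗[k] H :=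
  rTensor H (K10.mkQ ∘ₗ lTensor C (galQ k A H δ)
      ∘ₗ TensorProduct.map (mulLeft k c) LinearMap.id
      ∘ₗ (TensorProduct.assoc k C A A).toLinearMap)
    ∘ₗ (TensorProduct.assoc k (C ⊗[k] A) A H).symm.toLinearMap

lemma Theta_tmul (c d : C) (e a₀ : A) (h : H) :
    Theta k A C H δ K10 c ((d ⊗ₜ e) ⊗ₜ (a₀ ⊗ₜ h))
      = (K10.mkQ ((c * d) ⊗ₜ galQ k A H δ (e ⊗ₜ a₀))) ⊗ₜ h := by
  simp only [Theta, coe_comp, Function.comp_apply, LinearEquiv.coe_coe,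
    TensorProduct.assoc_symm_tmul, rTensor_tmul, TensorProduct.assoc_tmul,
    TensorProduct.map_tmul, mulLeft_apply, id_coe, id_eq, lTensor_tmul]

lemma gmap_Theta (c : C) (a₀ : A) (h : H) (u : C ⊗[k] A) :
    (gmap k A C H δ K10 c a₀ u) ⊗ₜ[k] h = Theta k A C H δ K10 c (u ⊗ₜ (a₀ ⊗ₜ h)) := by
  induction u using TensorProduct.induction_on with
  | zero => simp
  | tmul d e => rw [gmap_tmul, Theta_tmul]
  | add u₁ u₂ h₁ h₂ =>
    simp only [TensorProduct.add_tmul, map_add, h₁, h₂]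

lemma coactT_tmul (X : Type*) [Ring X] [Algebra k X] (x : X) (a : A) :
    coactT k A X H δ (x ⊗ₜ a) = (TensorProduct.assoc k X A H).symm (x ⊗ₜ δ a) := by
  simp only [coactT, coe_comp, Function.comp_apply, lTensor_tmul, LinearEquiv.coe_coe,
    AlgHom.toLinearMap_apply]

lemma deltaT2_gmap
    (δT2 : ((C ⊗[k] ((A ⊗[k] A) ⧸ galSpan k A H δ)) ⧸ K10) →ₗ[k]
      ((C ⊗[k] ((A ⊗[k] A) ⧸ galSpan k A H δ)) ⧸ K10) ⊗[k] H)
    (hδT2 : ∀ (c : C) (z : A ⊗[k] A),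
      δT2 (K10.mkQ (c ⊗ₜ galQ k A H δ z))
        = rTensor H (K10.mkQ
              ∘ₗ TensorProduct.mk k C ((A ⊗[k] A) ⧸ galSpan k A H δ) c
              ∘ₗ galQ k A H δ)
            (coactT k A A H δ z))
    (c : C) (a' : A) (u : C ⊗[k] A) :
    δT2 (gmap k A C H δ K10 c a' u) = Theta k A C H δ K10 c (u ⊗ₜ δ a') := by
  induction u using TensorProduct.induction_on with
  | zero => simp
  | tmul d e =>
    rw [gmap_tmul, hδT2, coactT_tmul]
    have claim : ∀ v : A ⊗[k] H,
        rTensor H (K10.mkQ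
            ∘ₗ TensorProduct.mk k C ((A ⊗[k] A) ⧸ galSpan k A H δ) (c * d)
            ∘ₗ galQ k A H δ) ((TensorProduct.assoc k A A H).symm (e ⊗ₜ v))
          = Theta k A C H δ K10 c ((d ⊗ₜ e) ⊗ₜ v) := by
      intro v
      induction v using TensorProduct.induction_on with
      | zero => simp
      | tmul a₀ h =>
        rw [TensorProduct.assoc_symm_tmul, rTensor_tmul, Theta_tmul]
        simp only [coe_comp, Function.comp_apply, TensorProduct.mk_apply]
      | add v₁ v₂ h₁ h₂ =>
        simp only [TensorProduct.tmul_add, map_add, h₁, h₂]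
    exact claim (δ a')
  | add u₁ u₂ h₁ h₂ =>
    simp only [TensorProduct.add_tmul, map_add, h₁, h₂]

end Aux
end Paper
set_option maxHeartbeats 2000000
set_option synthInstance.maxHeartbeats 400000

open Paper in
/-- under the hypotheses on `ψ` (twisting map, `H`-comodule morphism, `\barψ`
a normal `B`-bimodule morphism satisfying the distributive law), the map
`(c ⊗_B a) ⊗_C (c' ⊗_B a') ↦ c c'^ψ ⊗_B a^ψ ⊗_B a'` is a well-defined isomorphism of left
`C`-modules and right `H`-comodules `(C ⊗_B A) ⊗_C (C ⊗_B A) ≅ C ⊗_B (A ⊗_B A)`, with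
inverse `c ⊗_B (a ⊗_B a') ↦ (c ⊗_B a) ⊗_C (1_C ⊗_B a')`. -/
theorem balanced_tensor_iso
    (k : Type*) [Field k] (A : Type*) [Ring A] [Algebra k A]
    (C : Type*) [Ring C] [Algebra k C] (H : Type*) [Ring H] [HopfAlgebra k H]
    (δ : A →ₐ[k] A ⊗[k] H) (hδ : IsComodAlg k A H δ)
    (F : coinv k A H δ →ₐ[k] C)
    (ψ : A ⊗[k] C →ₗ[k] C ⊗[k] A) (hψ : IsTwistingMap k A C ψ)
    (hcomod : IsComodMor k A C H δ ψ)
    (hbar : BarBimod k A C H δ F ψ) (hnor : BarNormal k A C H δ F ψ)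
    (σ : C →ₗ[k] ((C ⊗[k] A) ⧸ pushSpan k A C H δ F)
      →ₗ[k] ((C ⊗[k] A) ⧸ pushSpan k A C H δ F))
    (hσ : SigmaSpec k A C H δ F σ) (hdist : BarDistrib k A C H δ F ψ σ)
    -- the ideal `ℐ` defining `(C ⊗_B A) ⊗_C (C ⊗_B A)`:
    (I10 : Submodule k (((C ⊗[k] A) ⧸ pushSpan k A C H δ F) ⊗[k]
      ((C ⊗[k] A) ⧸ pushSpan k A C H δ F)))
    (hI10 : I10 = Submodule.span k {z | ∃ (a a' : A) (c c' c'' : C),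
      z = (pushQ k A C H δ F (c ⊗ₜ a)) ⊗ₜ (pushQ k A C H δ F ((c'' * c') ⊗ₜ a'))
          - (pushQ k A C H δ F (rTensor A (LinearMap.mulLeft k c) (ψ (a ⊗ₜ c''))))
              ⊗ₜ (pushQ k A C H δ F (c' ⊗ₜ a'))})
    -- the relations defining `C ⊗_B (A ⊗_B A)`:
    (K10 : Submodule k (C ⊗[k] ((A ⊗[k] A) ⧸ galSpan k A H δ)))
    (hK10 : K10 = Submodule.span k {z | ∃ (c : C) (b : coinv k A H δ) (x : A ⊗[k] A),
      z = c ⊗ₜ (galQ k A H δ (rTensor A (LinearMap.mulLeft k (b : A)) x))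
          - (c * F b) ⊗ₜ (galQ k A H δ x)})
    -- the left `C`-module structures on both sides:
    (σ1 : C →ₗ[k] ((((C ⊗[k] A) ⧸ pushSpan k A C H δ F) ⊗[k]
        ((C ⊗[k] A) ⧸ pushSpan k A C H δ F)) ⧸ I10) →ₗ[k]
      ((((C ⊗[k] A) ⧸ pushSpan k A C H δ F) ⊗[k]
        ((C ⊗[k] A) ⧸ pushSpan k A C H δ F)) ⧸ I10))
    (hσ1 : ∀ (c₀ : C) (p q : (C ⊗[k] A) ⧸ pushSpan k A C H δ F),
      σ1 c₀ (I10.mkQ (p ⊗ₜ q)) = I10.mkQ ((σ c₀ p) ⊗ₜ q))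
    (σ2 : C →ₗ[k] ((C ⊗[k] ((A ⊗[k] A) ⧸ galSpan k A H δ)) ⧸ K10) →ₗ[k]
      ((C ⊗[k] ((A ⊗[k] A) ⧸ galSpan k A H δ)) ⧸ K10))
    (hσ2 : ∀ (c₀ c : C) (t : (A ⊗[k] A) ⧸ galSpan k A H δ),
      σ2 c₀ (K10.mkQ (c ⊗ₜ t)) = K10.mkQ ((c₀ * c) ⊗ₜ t))
    -- the right `H`-comodule structures on both sides (coaction on the last tensor factor):
    (δT1 : ((((C ⊗[k] A) ⧸ pushSpan k A C H δ F) ⊗[k]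
        ((C ⊗[k] A) ⧸ pushSpan k A C H δ F)) ⧸ I10) →ₗ[k]
      ((((C ⊗[k] A) ⧸ pushSpan k A C H δ F) ⊗[k]
        ((C ⊗[k] A) ⧸ pushSpan k A C H δ F)) ⧸ I10) ⊗[k] H)
    (hδT1 : ∀ (p : (C ⊗[k] A) ⧸ pushSpan k A C H δ F) (x : C ⊗[k] A),
      δT1 (I10.mkQ (p ⊗ₜ pushQ k A C H δ F x))
        = rTensor H (I10.mkQ
              ∘ₗ TensorProduct.mk k ((C ⊗[k] A) ⧸ pushSpan k A C H δ F)
                  ((C ⊗[k] A) ⧸ pushSpan k A C H δ F) p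
              ∘ₗ pushQ k A C H δ F)
            (coactT k A C H δ x))
    (δT2 : ((C ⊗[k] ((A ⊗[k] A) ⧸ galSpan k A H δ)) ⧸ K10) →ₗ[k]
      ((C ⊗[k] ((A ⊗[k] A) ⧸ galSpan k A H δ)) ⧸ K10) ⊗[k] H)
    (hδT2 : ∀ (c : C) (z : A ⊗[k] A),
      δT2 (K10.mkQ (c ⊗ₜ galQ k A H δ z))
        = rTensor H (K10.mkQ
              ∘ₗ TensorProduct.mk k C ((A ⊗[k] A) ⧸ galSpan k A H δ) c
              ∘ₗ galQ k A H δ)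
            (coactT k A A H δ z)) :
    -- then the two sides are isomorphic via the indicated mutually inverse maps, as left
    -- `C`-modules and right `H`-comodules:
    ∃ φ : (((((C ⊗[k] A) ⧸ pushSpan k A C H δ F) ⊗[k]
        ((C ⊗[k] A) ⧸ pushSpan k A C H δ F)) ⧸ I10)) ≃ₗ[k]
      ((C ⊗[k] ((A ⊗[k] A) ⧸ galSpan k A H δ)) ⧸ K10),
      (∀ (a a' : A) (c c' : C),
        φ (I10.mkQ ((pushQ k A C H δ F (c ⊗ₜ a)) ⊗ₜ (pushQ k A C H δ F (c' ⊗ₜ a'))))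
          = K10.mkQ (lTensor C (galQ k A H δ)
              (TensorProduct.map (LinearMap.mulLeft k c)
                ((TensorProduct.mk k A A).flip a') (ψ (a ⊗ₜ c')))))
      ∧ (∀ (c : C) (a a' : A),
        φ.symm (K10.mkQ (c ⊗ₜ galQ k A H δ (a ⊗ₜ a')))
          = I10.mkQ ((pushQ k A C H δ F (c ⊗ₜ a)) ⊗ₜ (pushQ k A C H δ F ((1 : C) ⊗ₜ a'))))
      ∧ (∀ (c₀ : C) (t), φ (σ1 c₀ t) = σ2 c₀ (φ t))
      ∧ (∀ t, δT2 (φ t) = rTensor H φ.toLinearMap (δT1 t)) := by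
    classical
  have hK : KSpec k A C H δ F K10 := hK10
  have hI : ISpec k A C H δ F ψ I10 := hI10
  set φf := phiFwd k A C H δ F K10 ψ σ hbar hK hσ hdist I10 hI with hφf
  set φb := phiBwd k A C H δ F K10 ψ hbar hnor I10 hI hK with hφb
  have hs : Function.Surjective
      ⇑(I10.mkQ ∘ₗ TensorProduct.map (pushQ k A C H δ F) (pushQ k A C H δ F)) := by
    rw [coe_comp]
    exact (Submodule.mkQ_surjective I10).comp
      (TensorProduct.map_surjective (Submodule.mkQ_surjective _) (Submodule.mkQ_surjective _))
  refine ⟨LinearEquiv.ofLinear φf φb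
      (fwd_bwd_id k A C H δ F K10 ψ σ hbar hnor hσ hdist I10 hI hK)
      (bwd_fwd_id k A C H δ F K10 ψ σ hbar hnor hσ hdist I10 hI hK), ?_, ?_, ?_, ?_⟩
  · intro a a' c c'
    rw [LinearEquiv.ofLinear_apply, hφf, phiFwd_mk, F0_tmul]
    simp only [gmap, coe_comp, Function.comp_apply]
  · intro c a a'
    rw [LinearEquiv.ofLinear_symm_apply, hφb, phiBwd_mk, H0_tmul]
  · intro c₀ t
    have hmap : φf ∘ₗ σ1 c₀ = (σ2 c₀) ∘ₗ φf := by
      rw [← LinearMap.cancel_right hs]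
      apply TensorProduct.ext'
      intro x y
      simp only [coe_comp, Function.comp_apply, TensorProduct.map_tmul]
      rw [hσ1 c₀ (pushQ k A C H δ F x) (pushQ k A C H δ F y), hσ c₀ x, hφf,
        phiFwd_mk, phiFwd_mk, sig2_F0 k A C H δ K10 ψ σ2 hσ2 c₀ x y]
    have := LinearMap.congr_fun hmap t
    simp only [coe_comp, Function.comp_apply] at this
    rw [LinearEquiv.ofLinear_apply, LinearEquiv.ofLinear_apply]
    exact this
  · intro t
    have hmap : δT2 ∘ₗ φf = rTensor H φf ∘ₗ δT1 := by
      rw [← LinearMap.cancel_right hs]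
      apply TensorProduct.ext'
      intro x y
      simp only [coe_comp, Function.comp_apply, TensorProduct.map_tmul]
      induction x using TensorProduct.induction_on with
      | zero => simp
      | add x₁ x₂ h₁ h₂ =>
        simp only [TensorProduct.add_tmul, map_add, h₁, h₂]
      | tmul c a =>
        induction y using TensorProduct.induction_on with
        | zero => simp
        | add y₁ y₂ h₁ h₂ =>
          simp only [TensorProduct.tmul_add, map_add, h₁, h₂]
        | tmul c' a' =>
          have claim : ∀ v : A ⊗[k] H,
              rTensor H (φf ∘ₗ (I10.mkQ
                  ∘ₗ TensorProduct.mk k ((C ⊗[k] A) ⧸ pushSpan k A C H δ F)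
                      ((C ⊗[k] A) ⧸ pushSpan k A C H δ F) (pushQ k A C H δ F (c ⊗ₜ a))
                  ∘ₗ pushQ k A C H δ F))
                ((TensorProduct.assoc k C A H).symm (c' ⊗ₜ v))
              = Theta k A C H δ K10 c (ψ (a ⊗ₜ c') ⊗ₜ v) := by
            intro v
            induction v using TensorProduct.induction_on with
            | zero => simp
            | tmul a₀ h =>
              rw [TensorProduct.assoc_symm_tmul, rTensor_tmul]
              simp only [coe_comp, Function.comp_apply, TensorProduct.mk_apply]
              rw [hφf, phiFwd_mk, F0_tmul, gmap_Theta]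
            | add v₁ v₂ h₁ h₂ =>
              simp only [TensorProduct.tmul_add, map_add, h₁, h₂]
          rw [hφf, phiFwd_mk, F0_tmul,
            deltaT2_gmap k A C H δ K10 δT2 hδT2 c a' (ψ (a ⊗ₜ c')),
            hδT1 (pushQ k A C H δ F (c ⊗ₜ a)) (c' ⊗ₜ a'), coactT_tmul,
            ← LinearMap.rTensor_comp_apply]
          exact (claim (δ a')).symm
    have := LinearMap.congr_fun hmap t
    simp only [coe_comp, Function.comp_apply] at this
    have hcoe : (LinearEquiv.ofLinear φf φb
        (fwd_bwd_id k A C H δ F K10 ψ σ hbar hnor hσ hdist I10 hI hK)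
        (bwd_fwd_id k A C H δ F K10 ψ σ hbar hnor hσ hdist I10 hI hK)).toLinearMap
        = φf := rfl
    rw [LinearEquiv.ofLinear_apply, hcoe]
    exact this
end
end

section
/- Under the hypotheses of the push-forward theorem (B ⊆ A a faithfully flat H-Galois extension, F: B → C an algebra map, ψ a twisting map which is an H-comodule morphism with \barψ a B-bimodule morphism satisfying \barψ(1_A⊗c) = c⊗_B1_A, \barψ(a⊗1_C) = 1_C⊗_Ba and \barψ(a⊗cc') = c^ψ·\barψ(a^ψ⊗c')), let τ(h) = h^{⟨1⟩}⊗_Bh^{⟨2⟩} denote the translation map of B ⊆ A. Then the translation map of the H-Galois extension C ⊆ C⊗^ψ_BA is τ^ψ: H → (C⊗^ψ_BA)⊗_C(C⊗^ψ_BA), τ^ψ(h) = (1_C⊗_Bh^{⟨1⟩})⊗_C(1_C⊗_Bh^{⟨2⟩}); that is, χ^ψ(τ^ψ(h)) = (1_C⊗_B1_A)⊗h for all h∈H, and (m^ψ⊗_C id)∘(id⊗τ^ψ)∘χ^ψ is the identity on (C⊗^ψ_BA)⊗_C(C⊗^ψ_BA). -/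
open TensorProduct LinearMap Function

noncomputable section
/-! A bijective canonical map which is left linear over its algebra is inverted by
`p ⊗ h ↦ p · χ⁻¹ (1 ⊗ h)`. The canonical map `χ^ψ` of `C ⊗^ψ_B A` is left linear because `m^ψ`
is associative, and `1_C ⊗_B 1_A` is a right unit for `m^ψ` because `\barψ (a ⊗ 1_C) = 1_C ⊗_B a`;
so both claims reduce to `χ^ψ (τ^ψ h) = (1_C ⊗_B 1_A) ⊗ h`. That holds because, again by
`\barψ (a ⊗ 1_C) = 1_C ⊗_B a`, `χ^ψ` sends `(1 ⊗_B a) ⊗_C (1 ⊗_B a')` to the image of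
`χ (a ⊗_B a')` under `a ↦ 1_C ⊗_B a`, while `χ (τ h) = 1_A ⊗ h`. -/

namespace Paper

section LeftLinear
variable {k : Type*} [CommRing k] {H : Type*} [AddCommGroup H] [Module k H]
variable {P Q : Type*} [AddCommGroup P] [Module k P] [AddCommGroup Q] [Module k Q]

theorem lift_compl₂_apply_self {m : P →ₗ[k] P →ₗ[k] P} {act : P →ₗ[k] Q →ₗ[k] Q}
    {e : Q ≃ₗ[k] P ⊗[k] H} {t : H →ₗ[k] Q} {u : P}
    (he : ∀ p v, e (act p v) = rTensor H (m p) (e v)) (ht : ∀ h, e (t h) = u ⊗ₜ h)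
    (hu : ∀ p, m p u = p) (z : Q) :
    TensorProduct.lift (act.compl₂ t) (e z) = z := by
  apply e.injective
  induction e z with
  | zero => simp
  | tmul p h => simp [he, ht, hu]
  | add w w' hw hw' => simp only [map_add, hw, hw']

end LeftLinear

section Chi
variable {k : Type*} [Field k] {H : Type*} [Ring H] [HopfAlgebra k H]
variable {P : Type*} [AddCommGroup P] [Module k P]

theorem chiP_tmul (m : P →ₗ[k] P →ₗ[k] P) (db : P →ₗ[k] P ⊗[k] H) (x y : P) :
    chiP m db (x ⊗ₜ y) = rTensor H (m x) (db y) := by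
  simp only [chiP, LinearMap.coe_comp, Function.comp_apply, LinearEquiv.coe_coe,
    lTensor_tmul]
  induction db y with
  | zero => simp
  | tmul y₀ h => simp
  | add w w' hw hw' => simp only [tmul_add, map_add, hw, hw']

theorem chiP_mul_left {m : P →ₗ[k] P →ₗ[k] P} (hm : ∀ x y z, m (m x y) z = m x (m y z))
    (db : P →ₗ[k] P ⊗[k] H) (p x y : P) :
    chiP m db (m p x ⊗ₜ y) = rTensor H (m p) (chiP m db (x ⊗ₜ y)) := by
  have hcomp : m (m p x) = m p ∘ₗ m x := LinearMap.ext (hm p x)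
  rw [chiP_tmul, chiP_tmul, hcomp, rTensor_comp, LinearMap.comp_apply]

theorem chiP_quotient_act {C : Type*} [Ring C] [Algebra k C] {m : P →ₗ[k] P →ₗ[k] P}
    (hm : ∀ x y z, m (m x y) z = m x (m y z)) {db : P →ₗ[k] P ⊗[k] H} {e : C → P}
    {χ : (P ⊗[k] P) ⧸ balSpan m e →ₗ[k] P ⊗[k] H}
    (hχ : ∀ z, χ ((balSpan m e).mkQ z) = chiP m db z)
    {act : P →ₗ[k] ((P ⊗[k] P) ⧸ balSpan m e) →ₗ[k] (P ⊗[k] P) ⧸ balSpan m e}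
    (hact : ∀ p x y, act p ((balSpan m e).mkQ (x ⊗ₜ y)) = (balSpan m e).mkQ (m p x ⊗ₜ y))
    (p : P) (v : (P ⊗[k] P) ⧸ balSpan m e) :
    χ (act p v) = rTensor H (m p) (χ v) := by
  obtain ⟨z, rfl⟩ := Submodule.mkQ_surjective _ v
  induction z with
  | zero => simp
  | tmul x y => rw [hact, hχ, hχ, chiP_mul_left hm]
  | add w w' hw hw' => simp only [map_add, hw, hw']

end Chi

section Twist
variable {k : Type*} [Field k] {A : Type*} [Ring A] [Algebra k A] {C : Type*} [Ring C] [Algebra k C]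

theorem tmul_tmul_tmul (ψ : A ⊗[k] C →ₗ[k] C ⊗[k] A) (c c' : C) (a a' : A) :
    tmul k A C ψ (c ⊗ₜ a) (c' ⊗ₜ a')
      = TensorProduct.map (mulLeft k c) (mulRight k a') (ψ (a ⊗ₜ c')) := by
  simp only [tmul, tmulMap, LinearMap.coe_comp, Function.comp_apply, LinearEquiv.coe_coe,
    assoc_symm_tmul, map_tmul, assoc_tmul, lTensor_tmul, LinearMap.id_coe, id_eq]
  induction ψ (a ⊗ₜ c') with
  | zero => simp
  | tmul d e => simp [mul'_apply]
  | add w w' hw hw' => simp only [tmul_add, add_tmul, map_add, hw, hw']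

theorem map_mulLeft_mulRight_mem_relSpan {B : Subalgebra k A} {F : B →ₐ[k] C}
    (c : C) (a : A) {z : C ⊗[k] A} (hz : z ∈ relSpan k A C B F) :
    TensorProduct.map (mulLeft k c) (mulRight k a) z ∈ relSpan k A C B F := by
  induction hz using Submodule.span_induction with
  | mem x hx =>
    obtain ⟨c₀, b, a₀, rfl⟩ := hx
    refine Submodule.subset_span ⟨c * c₀, b, a₀ * a, ?_⟩
    simp [mul_assoc]
  | zero => simp
  | add x y _ _ hx hy => simpa using add_mem hx hy
  | smul r x _ hx => simpa using Submodule.smul_mem _ r hx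

end Twist

section PushForward
variable {k : Type*} [Field k] {A : Type*} [Ring A] [Algebra k A]
variable {C : Type*} [Ring C] [Algebra k C] {H : Type*} [Ring H] [HopfAlgebra k H]
variable {δ : A →ₐ[k] A ⊗[k] H} {F : coinv k A H δ →ₐ[k] C}

theorem chi0_tmul (a a' : A) : chi0 k A H δ (a ⊗ₜ a') = rTensor H (mulLeft k a) (δ a') := by
  simp only [chi0, LinearMap.coe_comp, Function.comp_apply, LinearEquiv.coe_coe,
    lTensor_tmul, AlgHom.toLinearMap_apply]
  induction δ a' with
  | zero => simp
  | tmul a₀ h => simp [mul'_apply]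
  | add w w' hw hw' => simp only [tmul_add, map_add, hw, hw']

theorem coactT_tmul_s12 (c : C) (a : A) :
    coactT k A C H δ (c ⊗ₜ a) = rTensor H (TensorProduct.mk k C A c) (δ a) := by
  simp only [coactT, LinearMap.coe_comp, Function.comp_apply, LinearEquiv.coe_coe,
    lTensor_tmul, AlgHom.toLinearMap_apply]
  induction δ a with
  | zero => simp
  | tmul a₀ h => simp
  | add w w' hw hw' => simp only [tmul_add, map_add, hw, hw']

theorem pushQ_surjective : Function.Surjective (pushQ k A C H δ F) :=
  Submodule.mkQ_surjective _

theorem pushQ_map_mulLeft_mulRight (c : C) (a : A) {x y : C ⊗[k] A}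
    (h : pushQ k A C H δ F x = pushQ k A C H δ F y) :
    pushQ k A C H δ F (TensorProduct.map (mulLeft k c) (mulRight k a) x)
      = pushQ k A C H δ F (TensorProduct.map (mulLeft k c) (mulRight k a) y) := by
  rw [pushQ, Submodule.mkQ_apply, Submodule.mkQ_apply, Submodule.Quotient.eq] at h ⊢
  rw [← map_sub]
  exact map_mulLeft_mulRight_mem_relSpan c a h

variable {ψ : A ⊗[k] C →ₗ[k] C ⊗[k] A}
variable {m : ((C ⊗[k] A) ⧸ pushSpan k A C H δ F) →ₗ[k]
      ((C ⊗[k] A) ⧸ pushSpan k A C H δ F) →ₗ[k] ((C ⊗[k] A) ⧸ pushSpan k A C H δ F)}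

theorem pushQ_tmul_one_tmul
    (hnor : ∀ a : A, pushQ k A C H δ F (ψ (a ⊗ₜ (1 : C))) = pushQ k A C H δ F ((1 : C) ⊗ₜ a))
    (c : C) (a b : A) :
    pushQ k A C H δ F (tmul k A C ψ (c ⊗ₜ a) ((1 : C) ⊗ₜ b))
      = pushQ k A C H δ F (c ⊗ₜ (a * b)) := by
  rw [tmul_tmul_tmul, pushQ_map_mulLeft_mulRight c b (hnor a)]
  simp

theorem mul_pushQ_comp_mk_one
    (hnor : ∀ a : A, pushQ k A C H δ F (ψ (a ⊗ₜ (1 : C))) = pushQ k A C H δ F ((1 : C) ⊗ₜ a))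
    (hm : ∀ x y, m (pushQ k A C H δ F x) (pushQ k A C H δ F y)
      = pushQ k A C H δ F (tmul k A C ψ x y))
    (c : C) (a : A) :
    m (pushQ k A C H δ F (c ⊗ₜ a)) ∘ₗ pushQ k A C H δ F ∘ₗ TensorProduct.mk k C A 1
      = pushQ k A C H δ F ∘ₗ TensorProduct.mk k C A c ∘ₗ mulLeft k a :=
  LinearMap.ext fun b => by simp [hm, pushQ_tmul_one_tmul hnor]

theorem mul_pushQ_one_tmul_one
    (hnor : ∀ a : A, pushQ k A C H δ F (ψ (a ⊗ₜ (1 : C))) = pushQ k A C H δ F ((1 : C) ⊗ₜ a))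
    (hm : ∀ x y, m (pushQ k A C H δ F x) (pushQ k A C H δ F y)
      = pushQ k A C H δ F (tmul k A C ψ x y))
    (p : (C ⊗[k] A) ⧸ pushSpan k A C H δ F) :
    m p (pushQ k A C H δ F ((1 : C) ⊗ₜ (1 : A))) = p := by
  obtain ⟨x, rfl⟩ := pushQ_surjective p
  induction x with
  | zero => simp
  | tmul c a => rw [hm, pushQ_tmul_one_tmul hnor, mul_one]
  | add w w' hw hw' => simp only [map_add, LinearMap.add_apply, hw, hw']

theorem mul_assoc_of_isTwistingMap (hψ : IsTwistingMap k A C ψ)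
    (hm : ∀ x y, m (pushQ k A C H δ F x) (pushQ k A C H δ F y)
      = pushQ k A C H δ F (tmul k A C ψ x y))
    (x y z : (C ⊗[k] A) ⧸ pushSpan k A C H δ F) : m (m x y) z = m x (m y z) := by
  obtain ⟨u, rfl⟩ := pushQ_surjective x
  obtain ⟨v, rfl⟩ := pushQ_surjective y
  obtain ⟨w, rfl⟩ := pushQ_surjective z
  simp only [hm]
  exact congrArg _ (hψ u v w)

theorem chiP_pushQ_one_tmul
    (hnor : ∀ a : A, pushQ k A C H δ F (ψ (a ⊗ₜ (1 : C))) = pushQ k A C H δ F ((1 : C) ⊗ₜ a))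
    (hm : ∀ x y, m (pushQ k A C H δ F x) (pushQ k A C H δ F y)
      = pushQ k A C H δ F (tmul k A C ψ x y))
    {db : ((C ⊗[k] A) ⧸ pushSpan k A C H δ F) →ₗ[k] ((C ⊗[k] A) ⧸ pushSpan k A C H δ F) ⊗[k] H}
    (hdb : ∀ x, db (pushQ k A C H δ F x) = rTensor H (pushQ k A C H δ F) (coactT k A C H δ x))
    (a a' : A) :
    chiP m db (pushQ k A C H δ F ((1 : C) ⊗ₜ a) ⊗ₜ pushQ k A C H δ F ((1 : C) ⊗ₜ a'))
      = rTensor H (pushQ k A C H δ F ∘ₗ TensorProduct.mk k C A 1) (chi0 k A H δ (a ⊗ₜ a')) := by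
  rw [chiP_tmul, hdb, coactT_tmul_s12, chi0_tmul, ← rTensor_comp_apply, ← rTensor_comp_apply,
    ← rTensor_comp_apply]
  simp only [LinearMap.comp_assoc, mul_pushQ_comp_mk_one hnor hm]

end PushForward
end Paper

open Paper in
theorem pushforward_translation_map_general
    (k : Type*) [Field k] (A : Type*) [Ring A] [Algebra k A]
    (C : Type*) [Ring C] [Algebra k C] (H : Type*) [Ring H] [HopfAlgebra k H]
    (δ : A →ₐ[k] A ⊗[k] H)
    (χ : ((A ⊗[k] A) ⧸ galSpan k A H δ) ≃ₗ[k] A ⊗[k] H)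
    (hχ : ∀ x : A ⊗[k] A, χ (galQ k A H δ x) = chi0 k A H δ x)
    (F : coinv k A H δ →ₐ[k] C)
    (ψ : A ⊗[k] C →ₗ[k] C ⊗[k] A) (hψ : IsTwistingMap k A C ψ)
    (hnor : BarNormal k A C H δ F ψ)
    (m : ((C ⊗[k] A) ⧸ pushSpan k A C H δ F) →ₗ[k]
      ((C ⊗[k] A) ⧸ pushSpan k A C H δ F) →ₗ[k] ((C ⊗[k] A) ⧸ pushSpan k A C H δ F))
    (hm : ∀ x y : C ⊗[k] A,
      m (pushQ k A C H δ F x) (pushQ k A C H δ F y) = pushQ k A C H δ F (tmul k A C ψ x y))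
    (db : ((C ⊗[k] A) ⧸ pushSpan k A C H δ F) →ₗ[k]
      ((C ⊗[k] A) ⧸ pushSpan k A C H δ F) ⊗[k] H)
    (hdb : ∀ x : C ⊗[k] A,
      db (pushQ k A C H δ F x) = rTensor H (pushQ k A C H δ F) (coactT k A C H δ x))
    -- the canonical map `χ^ψ` of the extension `C ⊆ C ⊗^ψ_B A`, as a bijection:
    (echi : ((((C ⊗[k] A) ⧸ pushSpan k A C H δ F) ⊗[k]
        ((C ⊗[k] A) ⧸ pushSpan k A C H δ F)) ⧸ balSpan m (eC k A C H δ F)) ≃ₗ[k]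
          ((C ⊗[k] A) ⧸ pushSpan k A C H δ F) ⊗[k] H)
    (hechi : ∀ z, echi ((balSpan m (eC k A C H δ F)).mkQ z) = chiP m db z)
    -- the map `A ⊗_B A → (C ⊗^ψ_B A) ⊗_C (C ⊗^ψ_B A)`, `a ⊗_B a' ↦ (1 ⊗_B a) ⊗_C (1 ⊗_B a')`:
    (jmap : ((A ⊗[k] A) ⧸ galSpan k A H δ) →ₗ[k]
      ((((C ⊗[k] A) ⧸ pushSpan k A C H δ F) ⊗[k]
        ((C ⊗[k] A) ⧸ pushSpan k A C H δ F)) ⧸ balSpan m (eC k A C H δ F)))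
    (hjmap : ∀ x : A ⊗[k] A,
      jmap (galQ k A H δ x)
        = (balSpan m (eC k A C H δ F)).mkQ
            (TensorProduct.map (pushQ k A C H δ F ∘ₗ TensorProduct.mk k C A 1)
              (pushQ k A C H δ F ∘ₗ TensorProduct.mk k C A 1) x))
    -- the left multiplication of `C ⊗^ψ_B A` on the first factor of the balanced product:
    (lact : ((C ⊗[k] A) ⧸ pushSpan k A C H δ F) →ₗ[k]
      (((((C ⊗[k] A) ⧸ pushSpan k A C H δ F) ⊗[k]
        ((C ⊗[k] A) ⧸ pushSpan k A C H δ F)) ⧸ balSpan m (eC k A C H δ F)) →ₗ[k]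
       ((((C ⊗[k] A) ⧸ pushSpan k A C H δ F) ⊗[k]
        ((C ⊗[k] A) ⧸ pushSpan k A C H δ F)) ⧸ balSpan m (eC k A C H δ F))))
    (hlact : ∀ (p x y : (C ⊗[k] A) ⧸ pushSpan k A C H δ F),
      lact p ((balSpan m (eC k A C H δ F)).mkQ (x ⊗ₜ y))
        = (balSpan m (eC k A C H δ F)).mkQ ((m p x) ⊗ₜ y)) :
    -- `χ^ψ ∘ τ^ψ = (1_C ⊗_B 1_A) ⊗ -` :
    (∀ h : H,
      echi (jmap (transMap k A H δ χ h))
        = pushQ k A C H δ F ((1 : C) ⊗ₜ (1 : A)) ⊗ₜ h)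
    -- and `(m^ψ ⊗_C id) ∘ (id ⊗ τ^ψ) ∘ χ^ψ = id` :
    ∧ (∀ z, TensorProduct.lift
        (lact.compl₂ (jmap ∘ₗ transMap k A H δ χ)) (echi z) = z) := by
  have hjmap_galQ : ∀ x, echi (jmap (galQ k A H δ x))
      = rTensor H (pushQ k A C H δ F ∘ₗ TensorProduct.mk k C A 1) (chi0 k A H δ x) := by
    intro x
    induction x with
    | zero => simp
    | tmul a a' => rw [hjmap, map_tmul, hechi]; exact chiP_pushQ_one_tmul hnor.2 hm hdb a a'
    | add x x' hx hx' => simp only [map_add, hx, hx']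
  have htrans : ∀ h : H,
      echi (jmap (transMap k A H δ χ h)) = pushQ k A C H δ F ((1 : C) ⊗ₜ (1 : A)) ⊗ₜ h := by
    intro h
    obtain ⟨x, hx⟩ := Submodule.mkQ_surjective _ (transMap k A H δ χ h)
    have hχx : chi0 k A H δ x = (1 : A) ⊗ₜ h := by
      rw [← hχ, galQ, hx]
      simp [transMap]
    rw [← hx, ← galQ, hjmap_galQ, hχx, rTensor_tmul]
    rfl
  exact ⟨htrans, lift_compl₂_apply_self (e := echi)
    (chiP_quotient_act (χ := echi.toLinearMap) (mul_assoc_of_isTwistingMap hψ hm) hechi hlact) htrans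
    (mul_pushQ_one_tmul_one hnor.2 hm)⟩

open Paper in
/-- under the hypotheses of the push-forward theorem, the translation map of
the `H`-Galois extension `C ⊆ C ⊗^ψ_B A` is `τ^ψ(h) = (1_C ⊗_B h⁽¹⁾) ⊗_C (1_C ⊗_B h⁽²⁾)`:
`χ^ψ(τ^ψ(h)) = (1_C ⊗_B 1_A) ⊗ h` and `(m^ψ ⊗_C id) ∘ (id ⊗ τ^ψ) ∘ χ^ψ = id`. -/
theorem pushforward_translation_map
    (k : Type*) [Field k] (A : Type*) [Ring A] [Algebra k A]
    (C : Type*) [Ring C] [Algebra k C] (H : Type*) [Ring H] [HopfAlgebra k H]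
    (δ : A →ₐ[k] A ⊗[k] H) (hδ : IsComodAlg k A H δ)
    (χ : ((A ⊗[k] A) ⧸ galSpan k A H δ) ≃ₗ[k] A ⊗[k] H)
    (hχ : ∀ x : A ⊗[k] A, χ (galQ k A H δ x) = chi0 k A H δ x)
    (hff : IsFaithfullyFlatLeft (coinv k A H δ) A)
    (F : coinv k A H δ →ₐ[k] C)
    (ψ : A ⊗[k] C →ₗ[k] C ⊗[k] A) (hψ : IsTwistingMap k A C ψ)
    (hcomod : IsComodMor k A C H δ ψ)
    (hbar : BarBimod k A C H δ F ψ) (hnor : BarNormal k A C H δ F ψ)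
    (σ : C →ₗ[k] ((C ⊗[k] A) ⧸ pushSpan k A C H δ F)
      →ₗ[k] ((C ⊗[k] A) ⧸ pushSpan k A C H δ F))
    (hσ : SigmaSpec k A C H δ F σ) (hdist : BarDistrib k A C H δ F ψ σ)
    (m : ((C ⊗[k] A) ⧸ pushSpan k A C H δ F) →ₗ[k]
      ((C ⊗[k] A) ⧸ pushSpan k A C H δ F) →ₗ[k] ((C ⊗[k] A) ⧸ pushSpan k A C H δ F))
    (hm : ∀ x y : C ⊗[k] A,
      m (pushQ k A C H δ F x) (pushQ k A C H δ F y) = pushQ k A C H δ F (tmul k A C ψ x y))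
    (db : ((C ⊗[k] A) ⧸ pushSpan k A C H δ F) →ₗ[k]
      ((C ⊗[k] A) ⧸ pushSpan k A C H δ F) ⊗[k] H)
    (hdb : ∀ x : C ⊗[k] A,
      db (pushQ k A C H δ F x) = rTensor H (pushQ k A C H δ F) (coactT k A C H δ x))
    -- the canonical map `χ^ψ` of the extension `C ⊆ C ⊗^ψ_B A`, as a bijection:
    (echi : ((((C ⊗[k] A) ⧸ pushSpan k A C H δ F) ⊗[k]
        ((C ⊗[k] A) ⧸ pushSpan k A C H δ F)) ⧸ balSpan m (eC k A C H δ F)) ≃ₗ[k]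
          ((C ⊗[k] A) ⧸ pushSpan k A C H δ F) ⊗[k] H)
    (hechi : ∀ z, echi ((balSpan m (eC k A C H δ F)).mkQ z) = chiP m db z)
    -- the map `A ⊗_B A → (C ⊗^ψ_B A) ⊗_C (C ⊗^ψ_B A)`, `a ⊗_B a' ↦ (1 ⊗_B a) ⊗_C (1 ⊗_B a')`:
    (jmap : ((A ⊗[k] A) ⧸ galSpan k A H δ) →ₗ[k]
      ((((C ⊗[k] A) ⧸ pushSpan k A C H δ F) ⊗[k]
        ((C ⊗[k] A) ⧸ pushSpan k A C H δ F)) ⧸ balSpan m (eC k A C H δ F)))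
    (hjmap : ∀ x : A ⊗[k] A,
      jmap (galQ k A H δ x)
        = (balSpan m (eC k A C H δ F)).mkQ
            (TensorProduct.map (pushQ k A C H δ F ∘ₗ TensorProduct.mk k C A 1)
              (pushQ k A C H δ F ∘ₗ TensorProduct.mk k C A 1) x))
    -- the left multiplication of `C ⊗^ψ_B A` on the first factor of the balanced product:
    (lact : ((C ⊗[k] A) ⧸ pushSpan k A C H δ F) →ₗ[k]
      (((((C ⊗[k] A) ⧸ pushSpan k A C H δ F) ⊗[k]
        ((C ⊗[k] A) ⧸ pushSpan k A C H δ F)) ⧸ balSpan m (eC k A C H δ F)) →ₗ[k]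
       ((((C ⊗[k] A) ⧸ pushSpan k A C H δ F) ⊗[k]
        ((C ⊗[k] A) ⧸ pushSpan k A C H δ F)) ⧸ balSpan m (eC k A C H δ F))))
    (hlact : ∀ (p x y : (C ⊗[k] A) ⧸ pushSpan k A C H δ F),
      lact p ((balSpan m (eC k A C H δ F)).mkQ (x ⊗ₜ y))
        = (balSpan m (eC k A C H δ F)).mkQ ((m p x) ⊗ₜ y)) :
    -- `χ^ψ ∘ τ^ψ = (1_C ⊗_B 1_A) ⊗ -` :
    (∀ h : H,
      echi (jmap (transMap k A H δ χ h))
        = pushQ k A C H δ F ((1 : C) ⊗ₜ (1 : A)) ⊗ₜ h)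
    -- and `(m^ψ ⊗_C id) ∘ (id ⊗ τ^ψ) ∘ χ^ψ = id` :
    ∧ (∀ z, TensorProduct.lift
        (lact.compl₂ (jmap ∘ₗ transMap k A H δ χ)) (echi z) = z) :=
  pushforward_translation_map_general k A C H δ χ hχ F ψ hψ hnor m hm db hdb echi hechi jmap hjmap
    lact hlact
end
end

section
/- Under the hypotheses of the push-forward theorem (B ⊆ A a faithfully flat H-Galois extension, F: B → C an algebra map, ψ a twisting map which is an H-comodule morphism with \barψ a B-bimodule morphism satisfying \barψ(1_A⊗c) = c⊗_B1_A, \barψ(a⊗1_C) = 1_C⊗_Ba and \barψ(a⊗cc') = c^ψ·\barψ(a^ψ⊗c')): if the H-Galois extension B ⊆ A is cleft with cleaving map γ: H → A, then the H-Galois extension C ⊆ C⊗^ψ_BA is cleft with cleaving map h ↦ 1_C⊗_Bγ(h); if moreover γ is an algebra map (so B ⊆ A is trivial), then h ↦ 1_C⊗_Bγ(h) is an algebra map, so C ⊆ C⊗^ψ_BA is trivial. -/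
open TensorProduct LinearMap Function

noncomputable section
namespace Aux13
open Paper

variable (k : Type*) [Field k] (A : Type*) [Ring A] [Algebra k A]
    (C : Type*) [Ring C] [Algebra k C] (H : Type*) [Ring H] [HopfAlgebra k H]
    (δ : A →ₐ[k] A ⊗[k] H) (F : coinv k A H δ →ₐ[k] C)

/-- Right multiplication on the `A` factor preserves the push-forward relations. -/
lemma span_stable (a' : A) :
    ∀ x ∈ pushSpan k A C H δ F, lTensor C (LinearMap.mulRight k a') x ∈ pushSpan k A C H δ F := by
  intro x hx
  refine Submodule.span_induction ?_ ?_ ?_ ?_ hx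
  · rintro z ⟨c, b, a, rfl⟩
    apply Submodule.subset_span
    refine ⟨c, b, a * a', ?_⟩
    simp [TensorProduct.tmul_sub, mul_assoc]
  · simp
  · intro u v _ _ hu hv; rw [map_add]; exact Submodule.add_mem _ hu hv
  · intro r u _ hu; rw [map_smul]; exact Submodule.smul_mem _ r hu

lemma pushQ_congr_mulRight (a' : A) {x y : C ⊗[k] A}
    (h : pushQ k A C H δ F x = pushQ k A C H δ F y) :
    pushQ k A C H δ F (lTensor C (LinearMap.mulRight k a') x)
      = pushQ k A C H δ F (lTensor C (LinearMap.mulRight k a') y) := by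
  have hxy : x - y ∈ pushSpan k A C H δ F := by
    rwa [pushQ, Submodule.mkQ_apply, Submodule.mkQ_apply, Submodule.Quotient.eq] at h
  have := span_stable k A C H δ F a' _ hxy
  rw [map_sub] at this
  rw [pushQ, Submodule.mkQ_apply, Submodule.mkQ_apply, Submodule.Quotient.eq]
  exact this

lemma tmul_core (c : C) (a' : A) (z : C ⊗[k] A) :
    TensorProduct.map (LinearMap.mul' k C) (LinearMap.mul' k A)
      ((TensorProduct.assoc k (C ⊗[k] C) A A)
        ((TensorProduct.map (TensorProduct.assoc k C C A).symm.toLinearMap LinearMap.id)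
          ((c ⊗ₜ z) ⊗ₜ a')))
    = TensorProduct.map (LinearMap.mulLeft k c) (LinearMap.mulRight k a') z := by
  induction z using TensorProduct.induction_on with
  | zero =>
      have e0 : (c ⊗ₜ[k] (0 : C ⊗[k] A)) ⊗ₜ[k] a' = 0 := by
        rw [TensorProduct.tmul_zero, TensorProduct.zero_tmul]
      rw [e0, LinearMap.map_zero, LinearEquiv.map_zero, LinearMap.map_zero, LinearMap.map_zero]
  | tmul c' a =>
      simp [LinearMap.mul'_apply]
  | add x y hx hy =>
      have e1 : (c ⊗ₜ[k] (x + y)) ⊗ₜ[k] a' = (c ⊗ₜ[k] x) ⊗ₜ[k] a' + (c ⊗ₜ[k] y) ⊗ₜ[k] a' := by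
        rw [TensorProduct.tmul_add, TensorProduct.add_tmul]
      rw [e1, LinearMap.map_add, LinearEquiv.map_add, LinearMap.map_add, LinearMap.map_add,
        hx, hy]

lemma tmul_formula (ψ : A ⊗[k] C →ₗ[k] C ⊗[k] A) (c : C) (a : A) (c' : C) (a' : A) :
    tmul k A C ψ (c ⊗ₜ a) (c' ⊗ₜ a')
      = TensorProduct.map (LinearMap.mulLeft k c) (LinearMap.mulRight k a') (ψ (a ⊗ₜ c')) := by
  rw [Paper.tmul, Paper.tmulMap]
  simp only [LinearMap.comp_apply, LinearEquiv.coe_coe, TensorProduct.assoc_symm_tmul,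
    TensorProduct.map_tmul, TensorProduct.assoc_tmul, LinearMap.lTensor_tmul,
    LinearMap.id_coe, id_eq]
  exact tmul_core k A C c a' (ψ (a ⊗ₜ c'))

lemma pushQ_tmul (ψ : A ⊗[k] C →ₗ[k] C ⊗[k] A)
    (hnor : BarNormal k A C H δ F ψ) (a a' : A) :
    pushQ k A C H δ F (tmul k A C ψ ((1 : C) ⊗ₜ a) ((1 : C) ⊗ₜ a'))
      = pushQ k A C H δ F ((1 : C) ⊗ₜ (a * a')) := by
  rw [tmul_formula k A C ψ]
  have h1 : TensorProduct.map (LinearMap.mulLeft k (1 : C)) (LinearMap.mulRight k a')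
      = lTensor C (LinearMap.mulRight k a') := by
    rw [LinearMap.mulLeft_one]; rfl
  rw [h1]
  have := pushQ_congr_mulRight k A C H δ F a' (hnor.2 a)
  rw [this, LinearMap.lTensor_tmul, LinearMap.mulRight_apply]

end Aux13

open Paper in
/-- under the hypotheses of the push-forward theorem, if `B ⊆ A` is cleft with
cleaving map `γ`, then `C ⊆ C ⊗^ψ_B A` is cleft with cleaving map `h ↦ 1_C ⊗_B γ(h)`; if
moreover `γ` is an algebra map then so is `h ↦ 1_C ⊗_B γ(h)`, so the extension is trivial. -/
theorem pushforward_cleft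
    (k : Type*) [Field k] (A : Type*) [Ring A] [Algebra k A]
    (C : Type*) [Ring C] [Algebra k C] (H : Type*) [Ring H] [HopfAlgebra k H]
    (δ : A →ₐ[k] A ⊗[k] H) (hδ : IsComodAlg k A H δ)
    (χ : ((A ⊗[k] A) ⧸ galSpan k A H δ) ≃ₗ[k] A ⊗[k] H)
    (hχ : ∀ x : A ⊗[k] A, χ (galQ k A H δ x) = chi0 k A H δ x)
    (hff : IsFaithfullyFlatLeft (coinv k A H δ) A)
    (F : coinv k A H δ →ₐ[k] C)
    (ψ : A ⊗[k] C →ₗ[k] C ⊗[k] A) (hψ : IsTwistingMap k A C ψ)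
    (hcomod : IsComodMor k A C H δ ψ)
    (hbar : BarBimod k A C H δ F ψ) (hnor : BarNormal k A C H δ F ψ)
    (σ : C →ₗ[k] ((C ⊗[k] A) ⧸ pushSpan k A C H δ F)
      →ₗ[k] ((C ⊗[k] A) ⧸ pushSpan k A C H δ F))
    (hσ : SigmaSpec k A C H δ F σ) (hdist : BarDistrib k A C H δ F ψ σ)
    (m : ((C ⊗[k] A) ⧸ pushSpan k A C H δ F) →ₗ[k]
      ((C ⊗[k] A) ⧸ pushSpan k A C H δ F) →ₗ[k] ((C ⊗[k] A) ⧸ pushSpan k A C H δ F))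
    (hm : ∀ x y : C ⊗[k] A,
      m (pushQ k A C H δ F x) (pushQ k A C H δ F y) = pushQ k A C H δ F (tmul k A C ψ x y))
    (db : ((C ⊗[k] A) ⧸ pushSpan k A C H δ F) →ₗ[k]
      ((C ⊗[k] A) ⧸ pushSpan k A C H δ F) ⊗[k] H)
    (hdb : ∀ x : C ⊗[k] A,
      db (pushQ k A C H δ F x) = rTensor H (pushQ k A C H δ F) (coactT k A C H δ x))
    -- `γ` is a cleaving map for `B ⊆ A`:
    (γ : H →ₗ[k] A)
    (hγcom : δ.toLinearMap ∘ₗ γ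
      = rTensor H γ ∘ₗ Coalgebra.comul (R := k) (A := H))
    (hγconv : ∃ γi : H →ₗ[k] A,
      convP (LinearMap.mul k A) γ γi = convUnit (1 : A)
      ∧ convP (LinearMap.mul k A) γi γ = convUnit (1 : A)) :
    -- `h ↦ 1_C ⊗_B γ(h)` is an `H`-comodule morphism:
    (db ∘ₗ ((pushQ k A C H δ F ∘ₗ TensorProduct.mk k C A 1) ∘ₗ γ)
      = rTensor H ((pushQ k A C H δ F ∘ₗ TensorProduct.mk k C A 1) ∘ₗ γ)
          ∘ₗ Coalgebra.comul (R := k) (A := H))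
    -- which is convolution invertible, i.e. a cleaving map for `C ⊆ C ⊗^ψ_B A`:
    ∧ (∃ γi : H →ₗ[k] ((C ⊗[k] A) ⧸ pushSpan k A C H δ F),
        convP m ((pushQ k A C H δ F ∘ₗ TensorProduct.mk k C A 1) ∘ₗ γ) γi
          = convUnit (pushQ k A C H δ F ((1 : C) ⊗ₜ (1 : A)))
        ∧ convP m γi ((pushQ k A C H δ F ∘ₗ TensorProduct.mk k C A 1) ∘ₗ γ)
          = convUnit (pushQ k A C H δ F ((1 : C) ⊗ₜ (1 : A))))
    -- and if `γ` is an algebra map then so is `h ↦ 1_C ⊗_B γ(h)`: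
    ∧ ((∀ h h' : H, γ (h * h') = γ h * γ h') → γ 1 = 1 →
        (∀ h h' : H,
          m ((pushQ k A C H δ F ∘ₗ TensorProduct.mk k C A 1) (γ h))
            ((pushQ k A C H δ F ∘ₗ TensorProduct.mk k C A 1) (γ h'))
          = (pushQ k A C H δ F ∘ₗ TensorProduct.mk k C A 1) (γ (h * h')))
        ∧ (pushQ k A C H δ F ∘ₗ TensorProduct.mk k C A 1) (γ 1)
            = pushQ k A C H δ F ((1 : C) ⊗ₜ (1 : A))) := by
  set Q := pushQ k A C H δ F with hQ
  set J : A →ₗ[k] ((C ⊗[k] A) ⧸ pushSpan k A C H δ F) :=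
    Q ∘ₗ TensorProduct.mk k C A 1 with hJ
  have hJapp : ∀ a : A, J a = Q ((1 : C) ⊗ₜ a) := fun a => rfl
  -- key multiplicativity of `Q ∘ tmul` on `1 ⊗ₜ -`:
  have key : ∀ a a' : A, m (J a) (J a') = J (a * a') := by
    intro a a'
    rw [hJapp, hJapp, hJapp, hm]
    exact Aux13.pushQ_tmul k A C H δ F ψ hnor a a'
  refine ⟨?_, ?_, ?_⟩
  · -- comodule morphism
    apply LinearMap.ext; intro h
    simp only [LinearMap.comp_apply]
    rw [hJapp (γ h), hdb, coactT]
    have hδγ : δ.toLinearMap (γ h) = rTensor H γ (Coalgebra.comul (R := k) (A := H) h) :=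
      congrFun (congrArg DFunLike.coe hγcom) h
    simp only [LinearMap.comp_apply, LinearMap.lTensor_tmul, LinearEquiv.coe_coe]
    rw [hδγ]
    -- reduce to a statement about `comul h`
    generalize Coalgebra.comul (R := k) (A := H) h = z
    induction z using TensorProduct.induction_on with
    | zero =>
        rw [LinearMap.map_zero, TensorProduct.tmul_zero, LinearEquiv.map_zero,
          LinearMap.map_zero, LinearMap.map_zero]
    | tmul x y =>
        rw [show rTensor H γ (x ⊗ₜ[k] y) = γ x ⊗ₜ[k] y from rfl,
          show ((TensorProduct.assoc k C A H).symm ((1:C) ⊗ₜ (γ x ⊗ₜ[k] y)))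
            = ((1:C) ⊗ₜ γ x) ⊗ₜ[k] y from rfl,
          show rTensor H Q (((1:C) ⊗ₜ γ x) ⊗ₜ[k] y) = Q ((1:C) ⊗ₜ γ x) ⊗ₜ[k] y from rfl,
          show rTensor H (J ∘ₗ γ) (x ⊗ₜ[k] y) = J (γ x) ⊗ₜ[k] y from rfl, hJapp]
    | add u v hu hv =>
        rw [LinearMap.map_add, TensorProduct.tmul_add, LinearEquiv.map_add,
          LinearMap.map_add, LinearMap.map_add, hu, hv]
  · -- convolution invertibility
    obtain ⟨γi', hgi1, hgi2⟩ := hγconv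
    refine ⟨J ∘ₗ γi', ?_, ?_⟩
    all_goals
      apply LinearMap.ext; intro h
      rw [convP]
      simp only [LinearMap.comp_apply]
    · have hmap : ∀ z : H ⊗[k] H,
          TensorProduct.lift m
            (TensorProduct.map ((pushQ k A C H δ F ∘ₗ TensorProduct.mk k C A 1) ∘ₗ γ)
              (J ∘ₗ γi') z)
          = J (TensorProduct.lift (LinearMap.mul k A) (TensorProduct.map γ γi' z)) := by
        intro z
        induction z using TensorProduct.induction_on with
        | zero => simp
        | tmul x y =>
            simp only [TensorProduct.map_tmul, TensorProduct.lift.tmul, LinearMap.comp_apply,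
              LinearMap.mul_apply']
            exact key (γ x) (γi' y)
        | add u v hu hv => simp only [map_add, hu, hv]
      rw [hmap]
      have := congrFun (congrArg DFunLike.coe hgi1) h
      rw [convP] at this
      simp only [LinearMap.comp_apply] at this
      rw [this, convUnit]
      simp [hJapp, Q, Paper.convUnit, LinearMap.smulRight_apply]
    · have hmap : ∀ z : H ⊗[k] H,
          TensorProduct.lift m
            (TensorProduct.map (J ∘ₗ γi')
              ((pushQ k A C H δ F ∘ₗ TensorProduct.mk k C A 1) ∘ₗ γ) z)
          = J (TensorProduct.lift (LinearMap.mul k A) (TensorProduct.map γi' γ z)) := by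
        intro z
        induction z using TensorProduct.induction_on with
        | zero => simp
        | tmul x y =>
            simp only [TensorProduct.map_tmul, TensorProduct.lift.tmul, LinearMap.comp_apply,
              LinearMap.mul_apply']
            exact key (γi' x) (γ y)
        | add u v hu hv => simp only [map_add, hu, hv]
      rw [hmap]
      have := congrFun (congrArg DFunLike.coe hgi2) h
      rw [convP] at this
      simp only [LinearMap.comp_apply] at this
      rw [this, convUnit]
      simp [hJapp, Q, Paper.convUnit, LinearMap.smulRight_apply]
  · -- algebra map case
    intro hmul hone
    constructor
    · intro h h'
      have := key (γ h) (γ h')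
      rw [this, hmul]
    · simp only [LinearMap.comp_apply, hone]
      rfl
end
end
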